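/- arXiv:2210.00591 — 9 statements merged into one kernel-verified Lean document; each statement's English description precedes it below -/
import Mathlib

section
/- Let φ be an endomorphism of a group G, let H be a normal φ-invariant subgroup of G, let φ' : H → H be the restriction of φ to H, and let φ̄ : G/H → G/H be the induced endomorphism. If the fixed-point subgroup C(φ̄) = {x ∈ G/H : φ̄(x) = x} has exactly n elements (n finite), then R(φ') ≤ R(φ) · n. -/
/-!
Inclusion `H → G` induces a map `R(φ') → R(φ)`. If `h₀, h ∈ H` are `φ`-twisted conjugate in `G`,
say `h = g h₀ φ(g)⁻¹`, then the coset `gH` is fixed by `φ̄`, and the `φ'`-class of `h` depends only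
on that coset. So each fibre of `R(φ') → R(φ)` is the image of `C(φ̄)`, and has at most `n` points.
-/

/-- The twisted-conjugacy relation of an endomorphism `φ`. -/
def twistedConjRel {G : Type*} [Group G] (φ : G →* G) (x y : G) : Prop :=
  ∃ g : G, y = g * x * (φ g)⁻¹

/-- The set of Reidemeister classes of `φ`. -/
def ReidClasses (G : Type*) [Group G] (φ : G →* G) : Type _ :=
  Quot (twistedConjRel φ)

open Cardinal

theorem twistedConjRel_equivalence {G : Type*} [Group G] (φ : G →* G) :
    Equivalence (twistedConjRel φ) where
  refl _ := ⟨1, by simp⟩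
  symm := by
    rintro x _ ⟨g, rfl⟩
    exact ⟨g⁻¹, by simp [mul_assoc]⟩
  trans := by
    rintro x _ _ ⟨g, rfl⟩ ⟨g', rfl⟩
    exact ⟨g' * g, by simp [mul_assoc]⟩

namespace ReidClasses

theorem mk_eq_mk_iff {G : Type*} [Group G] {φ : G →* G} {x y : G} :
    Quot.mk (twistedConjRel φ) x = Quot.mk _ y ↔ twistedConjRel φ x y :=
  Quot.eq.trans (twistedConjRel_equivalence φ).eqvGen_iff

def map {G K : Type*} [Group G] [Group K] {φ : G →* G} {ψ : K →* K} (f : G →* K)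
    (hf : ∀ g, f (φ g) = ψ (f g)) : ReidClasses G φ → ReidClasses K ψ :=
  Quot.map f fun _ _ ⟨g, hg⟩ => ⟨f g, by rw [hg, map_mul, map_mul, map_inv, hf]⟩

end ReidClasses

section Restriction

variable {G : Type*} [Group G] {φ : G →* G} {H : Subgroup G} [H.Normal]

theorem mul_mul_inv_map_mem_of_mk_map_eq {g h : G} (hg : (φ g : G ⧸ H) = g) (hh : h ∈ H) :
    g * h * (φ g)⁻¹ ∈ H := by
  rw [← QuotientGroup.eq_one_iff, QuotientGroup.mk_mul, QuotientGroup.mk_mul,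
    QuotientGroup.mk_inv, hg, (QuotientGroup.eq_one_iff h).2 hh, mul_one, mul_inv_cancel]

theorem mk_map_eq_of_mul_mul_inv_map_mem {g h : G} (hh : h ∈ H) (hgh : g * h * (φ g)⁻¹ ∈ H) :
    (φ g : G ⧸ H) = g := by
  rw [← QuotientGroup.eq_one_iff, QuotientGroup.mk_mul, QuotientGroup.mk_mul,
    QuotientGroup.mk_inv, (QuotientGroup.eq_one_iff h).2 hh, mul_one, mul_inv_eq_one] at hgh
  exact hgh.symm

variable {φ' : H →* H}

def twistByFixed {g : G} (hg : (φ g : G ⧸ H) = g) (h₀ : H) : H :=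
  ⟨g * h₀ * (φ g)⁻¹, mul_mul_inv_map_mem_of_mk_map_eq hg h₀.2⟩

theorem twistedConjRel_twistByFixed (hφ' : ∀ h : H, (φ' h : G) = φ h) {g₁ g₂ : G}
    (hg₁ : (φ g₁ : G ⧸ H) = g₁) (hg₂ : (φ g₂ : G ⧸ H) = g₂) (hg : (g₁ : G ⧸ H) = g₂) (h₀ : H) :
    twistedConjRel φ' (twistByFixed hg₁ h₀) (twistByFixed hg₂ h₀) := by
  have hk : g₂ * g₁⁻¹ ∈ H := by
    rw [← QuotientGroup.eq_one_iff, QuotientGroup.mk_mul, QuotientGroup.mk_inv, hg,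
      mul_inv_cancel]
  refine ⟨⟨g₂ * g₁⁻¹, hk⟩, Subtype.ext ?_⟩
  simp only [twistByFixed, Subgroup.coe_mul, InvMemClass.coe_inv, hφ', map_mul, map_inv]
  group

theorem mk_preimage_map_subtype_le (hφ' : ∀ h : H, (φ' h : G) = φ h) (φbar : G ⧸ H →* G ⧸ H)
    (hφbar : ∀ g : G, φbar g = φ g) (c : ReidClasses G φ) :
    #(ReidClasses.map H.subtype hφ' ⁻¹' {c}) ≤ #{x : G ⧸ H // φbar x = x} := by
  rcases (ReidClasses.map H.subtype hφ' ⁻¹' {c}).eq_empty_or_nonempty with hempty | ⟨q₀, hq₀⟩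
  · simp [hempty]
  obtain ⟨h₀, rfl⟩ := Quot.exists_rep q₀
  have out_fixed (x : {x : G ⧸ H // φbar x = x}) : (φ x.1.out : G ⧸ H) = x.1.out := by
    rw [← hφbar, QuotientGroup.out_eq', x.2]
  let twistClass (x : {x : G ⧸ H // φbar x = x}) : ReidClasses H φ' :=
    Quot.mk _ (twistByFixed (out_fixed x) h₀)
  refine (mk_le_mk_of_subset (t := Set.range twistClass) ?_).trans mk_range_le
  rintro q hq
  obtain ⟨h, rfl⟩ := Quot.exists_rep q
  obtain ⟨g, hg⟩ := ReidClasses.mk_eq_mk_iff.1 (hq.trans hq₀.symm).symm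
  replace hg : (h : G) = g * h₀ * (φ g)⁻¹ := hg
  have hg_fixed : (φ g : G ⧸ H) = g := mk_map_eq_of_mul_mul_inv_map_mem h₀.2 (hg ▸ h.2)
  let x : {x : G ⧸ H // φbar x = x} := ⟨g, by rw [hφbar, hg_fixed]⟩
  refine ⟨x, ReidClasses.mk_eq_mk_iff.2 ?_⟩
  convert twistedConjRel_twistByFixed hφ' (out_fixed x) hg_fixed (QuotientGroup.out_eq' _) h₀
  exact Subtype.ext hg

end Restriction

theorem reidemeister_restriction_le_general
    {G : Type*} [Group G] (φ : G →* G) (H : Subgroup G) [H.Normal]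
    (φ' : H →* H) (hφ' : ∀ h : H, (φ' h : G) = φ (h : G))
    (φbar : G ⧸ H →* G ⧸ H)
    (hφbar : ∀ g : G, φbar (QuotientGroup.mk g) = QuotientGroup.mk (φ g))
    (n : ℕ) (hfin : Finite {x : G ⧸ H // φbar x = x})
    (hn : Nat.card {x : G ⧸ H // φbar x = x} = n) :
    Cardinal.mk (ReidClasses ↥H φ') ≤ Cardinal.mk (ReidClasses G φ) * n := by
  rw [← hn, Nat.cast_card]
  exact mk_le_mk_mul_of_mk_preimage_le _ (mk_preimage_map_subtype_le hφ' φbar hφbar)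

/-- If `H` is a normal `φ`-invariant subgroup, `φ'` the restriction of `φ` to `H`,
`φ̄` the induced endomorphism of `G ⧸ H`, and the fixed-point subgroup of `φ̄` has
exactly `n` elements, then `R(φ') ≤ R(φ) * n`. -/
theorem reidemeister_restriction_le
    {G : Type*} [Group G] (φ : G →* G) (H : Subgroup G) [H.Normal]
    (hinv : ∀ h ∈ H, φ h ∈ H)
    (φ' : H →* H) (hφ' : ∀ h : H, (φ' h : G) = φ (h : G))
    (φbar : G ⧸ H →* G ⧸ H)
    (hφbar : ∀ g : G, φbar (QuotientGroup.mk g) = QuotientGroup.mk (φ g))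
    (n : ℕ) (hfin : Finite {x : G ⧸ H // φbar x = x})
    (hn : Nat.card {x : G ⧸ H // φbar x = x} = n) :
    Cardinal.mk (ReidClasses ↥H φ') ≤ Cardinal.mk (ReidClasses G φ) * n :=
  reidemeister_restriction_le_general φ H φ' hφ' φbar hφbar n hfin hn
end

section
/- Let φ be an endomorphism of a group G, let H be a normal φ-invariant subgroup of G, let φ' : H → H be the restriction of φ to H, and let φ̄ : G/H → G/H be the induced endomorphism. If the fixed-point subgroup C(φ̄) of φ̄ is trivial, then for every h ∈ H the Reidemeister class of h under φ' equals the intersection with H of the Reidemeister class of h under φ. -/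
/-- The Reidemeister class of `x` under `φ`. -/
def ReidClass {G : Type*} [Group G] (φ : G →* G) (x : G) : Set G :=
  {y | twistedConjRel φ x y}

/-- If `H` is a normal `φ`-invariant subgroup, `φ'` the restriction of `φ` to `H`,
`φ̄` the induced endomorphism of `G ⧸ H`, and the fixed-point subgroup of `φ̄` is trivial,
then each Reidemeister class of `φ'` is the intersection of the corresponding
Reidemeister class of `φ` with `H`. -/
theorem reidemeister_class_restriction_eq_inter
    {G : Type*} [Group G] (φ : G →* G) (H : Subgroup G) [H.Normal]
    (hinv : ∀ h ∈ H, φ h ∈ H)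
    (φ' : H →* H) (hφ' : ∀ h : H, (φ' h : G) = φ (h : G))
    (φbar : G ⧸ H →* G ⧸ H)
    (hφbar : ∀ g : G, φbar (QuotientGroup.mk g) = QuotientGroup.mk (φ g))
    (htriv : ∀ x : G ⧸ H, φbar x = x → x = 1) :
    ∀ h : H, (Subtype.val '' ReidClass φ' h) = ReidClass φ (h : G) ∩ (H : Set G) := by
  intro h
  ext y
  constructor
  · rintro ⟨y', ⟨g, rfl⟩, rfl⟩
    refine ⟨⟨(g : G), ?_⟩, (g * h * (φ' g)⁻¹).2⟩
    push_cast
    rw [hφ' g]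
  · rintro ⟨⟨g, hy⟩, hyH⟩
    have hgH : g ∈ H := by
      rw [← QuotientGroup.eq_one_iff]
      apply htriv
      rw [hφbar]
      have h1 : (QuotientGroup.mk y : G ⧸ H) = 1 := (QuotientGroup.eq_one_iff y).mpr hyH
      have h2 : (QuotientGroup.mk (h : G) : G ⧸ H) = 1 := (QuotientGroup.eq_one_iff _).mpr h.2
      have := congrArg (QuotientGroup.mk : G → G ⧸ H) hy
      simp only [QuotientGroup.mk_mul, QuotientGroup.mk_inv, h1, h2, mul_one, one_mul] at this
      exact (mul_inv_eq_one.mp this.symm).symm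
    refine ⟨⟨y, hyH⟩, ⟨⟨g, hgH⟩, ?_⟩, rfl⟩
    apply Subtype.ext
    push_cast
    rw [hφ' ⟨g, hgH⟩]
    exact hy
end

section
/- Let φ be an automorphism of a finite group F. Then the number of fixed points of φ satisfies |C(φ)| ≤ 2^(2^(R(φ))), where R(φ) is the Reidemeister number of φ. -/
open Finset MulAction

section Inequalities

variable {K : Type*} [Field K] [LinearOrder K] [IsStrictOrderedRing K]

theorem add_two_pow_le_four_mul_pow (m : ℕ) : (m + 2) ^ (m + 1) ≤ 4 * (m + 1) ^ (2 * m) := by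
  rcases m with _ | m
  · norm_num
  calc (m + 3) ^ (m + 2) ≤ (2 * (m + 2)) ^ (m + 2) := by gcongr; omega
    _ = 4 * 2 ^ m * (m + 2) ^ (m + 2) := by rw [mul_pow]; ring
    _ ≤ 4 * (m + 2) ^ m * (m + 2) ^ (m + 2) := by gcongr; omega
    _ = 4 * (m + 1 + 1) ^ (2 * (m + 1)) := by ring

/-- Bernoulli's inequality for `1 + a = (n + 2) (t - 1) / ((n + 1) t)`. -/
theorem pow_succ_mul_pow_le {t : K} (n : ℕ) (ht : n + 1 < t) (ht' : t ≤ n + 2) :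
    t ^ (n + 1) * (n + 1) ^ n ≤ (n + 2) ^ (n + 1) * (t - 1) ^ n := by
  set u : K := n + 1 with hu
  clear_value u
  have hu0 : 0 < u := by rw [hu]; positivity
  have ht0 : 0 < t := by linarith
  have ht1 : 0 < t - 1 := by linarith
  have hbern := one_add_mul_le_pow (a := (t - u - 1) / (t * u)) (by
    rw [le_div_iff₀ (by positivity)]; nlinarith) (n + 1)
  have hquad : (t - 1) * t ≤ u * (2 * t - u - 1) := by nlinarith
  have hbase : (1 + (t - u - 1) / (t * u)) * (t * u) = (u + 1) * (t - 1) := by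
    field_simp; ring
  rw [show (n : K) + 2 = u + 1 by rw [hu]; ring]
  refine le_of_mul_le_mul_right ?_ (mul_pos ht1 hu0)
  calc t ^ (n + 1) * u ^ n * ((t - 1) * u) = t ^ n * u ^ (n + 1) * ((t - 1) * t) := by ring
    _ ≤ t ^ n * u ^ (n + 1) * (u * (2 * t - u - 1)) := by gcongr
    _ = u * ((1 + (n + 1 : ℕ) * ((t - u - 1) / (t * u))) * (t * u) ^ (n + 1)) := by
        push_cast; rw [← hu]; field_simp; ring
    _ ≤ u * ((1 + (t - u - 1) / (t * u)) ^ (n + 1) * (t * u) ^ (n + 1)) := by gcongr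
    _ = (u + 1) ^ (n + 1) * (t - 1) ^ n * ((t - 1) * u) := by
        rw [← mul_pow, hbase, mul_pow]; ring

theorem exists_nat_lt_le_add_one [FloorSemiring K] {c : K} (hc : 0 < c) :
    ∃ n : ℕ, n < c ∧ c ≤ n + 1 := by
  obtain ⟨n, hn⟩ := Nat.exists_eq_add_of_le' (Nat.lt_ceil.mpr (by exact_mod_cast hc) : 0 < ⌈c⌉₊)
  refine ⟨n, ?_, by exact_mod_cast hn ▸ Nat.le_ceil c⟩
  have := Nat.ceil_lt_add_one hc.le
  rw [hn] at this
  push_cast at this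
  linarith

theorem inv_le_of_mul_eq_intCast {D R : K} {d : ℤ} (hD : 0 < D) (hR : 0 < R) (h : D * R = d) :
    R⁻¹ ≤ D := by
  have hd : (0 : K) < d := h ▸ mul_pos hD hR
  have hd1 : (1 : K) ≤ d := by exact_mod_cast (show (0 : ℤ) < d by exact_mod_cast hd)
  rw [inv_le_iff_one_le_mul₀ hR]
  linarith

theorem mul_sum_inv_le_card {ι : Type*} (S : Finset ι) {x : ι → K} {m : K} (hm : 0 < m)
    (hx : ∀ i ∈ S, m ≤ x i) : m * ∑ i ∈ S, 1 / x i ≤ #S := by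
  rw [mul_sum]
  calc ∑ i ∈ S, m * (1 / x i) ≤ ∑ _i ∈ S, (1 : K) := by
        gcongr with i hi
        rw [mul_one_div, div_le_one (hm.trans_le (hx i hi))]
        exact hx i hi
    _ = #S := by simp

end Inequalities

section EgyptianBound

variable {K : Type*} [Field K] [LinearOrder K] [IsStrictOrderedRing K]

def egyptianBound (D Q : K) (s : ℕ) : K := 4 * D * (s * Q) ^ (s - 1)

variable {D Q : K}

theorem egyptianBound_nonneg (hD : 0 ≤ D) (hQ : 0 ≤ Q) (s : ℕ) : 0 ≤ egyptianBound D Q s := by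
  unfold egyptianBound; positivity

theorem le_egyptianBound_pow (hQ : 1 ≤ Q) (hQD : Q ≤ D) {s : ℕ} (hs : 0 < s) (k : ℕ) :
    D ≤ egyptianBound D Q s ^ 2 ^ k := by
  have : 1 ≤ (s * Q) ^ (s - 1) :=
    one_le_pow₀ (one_le_mul_of_one_le_of_one_le (by exact_mod_cast hs) hQ)
  have hG : D ≤ egyptianBound D Q s := by unfold egyptianBound; nlinarith
  exact hG.trans (le_self_pow₀ (by linarith) (by positivity))

theorem egyptianBound_succ_succ_le_sq (hQ : 1 ≤ Q) (hQD : Q ≤ D) (m : ℕ) :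
    egyptianBound D Q (m + 2) ≤ egyptianBound D Q (m + 1) ^ 2 := by
  have hnum : ((m : K) + 2) ^ (m + 1) ≤ 4 * ((m : K) + 1) ^ (2 * m) := by
    exact_mod_cast add_two_pow_le_four_mul_pow m
  have hpow : Q ^ (m + 1) ≤ D * Q ^ (2 * m) := by
    rw [pow_succ']
    gcongr
    · linarith
    · omega
  simp only [egyptianBound, Nat.add_sub_cancel]
  push_cast
  calc 4 * D * (((m : K) + 2) * Q) ^ (m + 1)
        = 4 * D * (((m : K) + 2) ^ (m + 1) * Q ^ (m + 1)) := by rw [mul_pow]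
    _ ≤ 4 * D * ((4 * ((m : K) + 1) ^ (2 * m)) * (D * Q ^ (2 * m))) := by
        gcongr
        linarith
    _ = (4 * D * (((m : K) + 1) * Q) ^ m) ^ 2 := by simp only [mul_pow]; ring

theorem egyptianBound_add_le_pow (hQ : 1 ≤ Q) (hQD : Q ≤ D) {s : ℕ} (hs : 0 < s) (k : ℕ) :
    egyptianBound D Q (s + k) ≤ egyptianBound D Q s ^ 2 ^ k := by
  obtain ⟨s, rfl⟩ := Nat.exists_eq_add_of_lt hs
  induction k with
  | zero => simp
  | succ k ih =>
    calc egyptianBound D Q (0 + s + 1 + (k + 1)) ≤ egyptianBound D Q (0 + s + 1 + k) ^ 2 := by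
          rw [show 0 + s + 1 + (k + 1) = s + k + 2 by omega,
            show 0 + s + 1 + k = s + k + 1 by omega]
          exact egyptianBound_succ_succ_le_sq hQ hQD _
      _ ≤ (egyptianBound D Q (0 + s + 1) ^ 2 ^ k) ^ 2 := by
          gcongr
          exact egyptianBound_nonneg (by linarith) (by linarith) _
      _ = egyptianBound D Q (0 + s + 1) ^ 2 ^ (k + 1) := by ring

theorem egyptianBound_mul_div_sub_one_le {t : K} (hD : 0 ≤ D) (hQ : 0 ≤ Q) (n : ℕ)
    (ht : n + 1 < t) (ht' : t ≤ n + 2) :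
    egyptianBound (D * (t * Q)) (t * Q / (t - 1)) (n + 1) ≤ egyptianBound D Q (n + 2) := by
  have ht1 : 0 < t - 1 := by
    have : (0 : K) ≤ n := n.cast_nonneg
    linarith
  simp only [egyptianBound, Nat.add_sub_cancel]
  push_cast
  calc 4 * (D * (t * Q)) * (((n : K) + 1) * (t * Q / (t - 1))) ^ n
        = 4 * D * Q ^ (n + 1) * (t ^ (n + 1) * (n + 1) ^ n / (t - 1) ^ n) := by
          simp only [mul_pow, div_pow]; field_simp; ring
    _ ≤ 4 * D * Q ^ (n + 1) * (n + 2) ^ (n + 1) := by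
        gcongr
        rw [div_le_iff₀ (by positivity)]
        exact pow_succ_mul_pow_le n ht ht'
    _ = 4 * D * (((n : K) + 2) * Q) ^ (n + 1) := by rw [mul_pow]; ring

theorem egyptianBound_mul_inv_sub_le_pow {R x : K} (hR : 0 < R) (hR1 : R ≤ 1) (hRD : R⁻¹ ≤ D)
    {s n : ℕ} (hs : 0 < s) (hsn : s ≤ n + 2) (hn : n + 1 < x * R) (hn' : x * R ≤ n + 2) :
    egyptianBound (D * x) (R - 1 / x)⁻¹ (n + 1) ≤ egyptianBound D R⁻¹ s ^ 2 ^ (n + 2 - s) := by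
  have hQ : 1 ≤ R⁻¹ := one_le_inv₀ hR |>.mpr hR1
  set t := x * R with ht
  have hx : x = t * R⁻¹ := by rw [ht]; field_simp
  have ht1 : 0 < t - 1 := by
    have : (0 : K) ≤ n := n.cast_nonneg
    linarith
  have hR' : (R - 1 / x)⁻¹ = t * R⁻¹ / (t - 1) := by
    have : t ≠ 0 := by linarith
    rw [hx]; field_simp
  rw [hR', hx]
  calc egyptianBound (D * (t * R⁻¹)) (t * R⁻¹ / (t - 1)) (n + 1)
      ≤ egyptianBound D R⁻¹ (n + 2) :=
        egyptianBound_mul_div_sub_one_le (by linarith) (by linarith) n hn hn'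
    _ = egyptianBound D R⁻¹ (s + (n + 2 - s)) := by rw [Nat.add_sub_cancel' hsn]
    _ ≤ egyptianBound D R⁻¹ s ^ 2 ^ (n + 2 - s) := egyptianBound_add_le_pow hQ hRD hs _

end EgyptianBound

theorem le_egyptianBound_pow_of_sum_inv_eq {ι : Type*} (x : ι → ℕ) (S : Finset ι) (R : ℚ)
    (D L s : ℕ) (hL : ∀ i ∈ S, L ≤ x i) (hR : ∑ i ∈ S, (1 : ℚ) / x i = R) (hR1 : R ≤ 1)
    (hD : 0 < D) (hDR : ∃ d : ℤ, D * R = d) (hs : 0 < s) (hsL : s < L * R + 1) :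
    ∀ i ∈ S, (x i : ℚ) ≤ egyptianBound (D : ℚ) R⁻¹ s ^ 2 ^ (#S - s) := by
  classical
  induction S using Finset.induction_on_min_value x generalizing R D L s with
  | empty => simp
  | insert a S ha hmin ih =>
    rw [sum_insert ha] at hR
    have hLa : (L : ℚ) ≤ x a := by exact_mod_cast hL a (mem_insert_self a S)
    have hLR : 0 < (L : ℚ) * R := by linarith [(Nat.one_le_cast.mpr hs : (1 : ℚ) ≤ s)]
    have hRpos : 0 < R := pos_of_mul_pos_right hLR L.cast_nonneg
    have hxa : (0 : ℚ) < x a := (pos_of_mul_pos_left hLR hRpos.le).trans_le hLa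
    obtain ⟨d, hd⟩ := hDR
    have hRD : R⁻¹ ≤ D := inv_le_of_mul_eq_intCast (by exact_mod_cast hD) hRpos hd
    rw [card_insert_of_notMem ha]
    rcases S.eq_empty_or_nonempty with rfl | hS
    · simp only [sum_empty, add_zero, one_div] at hR
      simp only [insert_empty, mem_singleton, forall_eq]
      rw [← inv_inv (x a : ℚ), hR]
      exact hRD.trans (le_egyptianBound_pow (one_le_inv₀ hRpos |>.mpr hR1) hRD hs _)
    have hmin' : ∀ i ∈ S, (x a : ℚ) ≤ x i := fun i hi => by exact_mod_cast hmin i hi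
    have hR' : ∑ i ∈ S, (1 : ℚ) / x i = R - 1 / x a := by rw [← hR]; ring
    have hR'pos : 0 < R - 1 / x a :=
      hR' ▸ sum_pos (fun i hi => one_div_pos.mpr (hxa.trans_le (hmin' i hi))) hS
    have hcard := mul_sum_inv_le_card S hxa hmin'
    have hxR : x a * (R - 1 / x a) = x a * R - 1 := by field_simp
    rw [hR', hxR] at hcard
    obtain ⟨n, hn, hn'⟩ := exists_nat_lt_le_add_one (hxR ▸ mul_pos hxa hR'pos)
    have hsn : s ≤ n + 2 := by
      have : (s : ℚ) < n + 3 := by nlinarith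
      exact Nat.lt_succ_iff.mp (by exact_mod_cast this)
    have hnS : n + 1 ≤ #S := Nat.succ_le_of_lt (by exact_mod_cast hn.trans_le hcard)
    have ih' := ih (R - 1 / x a) (D * x a) (x a) (n + 1) hmin hR'
      (by linarith [one_div_pos.mpr hxa]) (Nat.mul_pos hD (by exact_mod_cast hxa)) ⟨d * x a - D, by
        push_cast; rw [mul_assoc, hxR, ← hd]; ring⟩ (by omega) (by push_cast; linarith)
    have hbound : ∀ i ∈ S, (x i : ℚ) ≤ egyptianBound (D : ℚ) R⁻¹ s ^ 2 ^ (#S + 1 - s) := by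
      intro i hi
      calc (x i : ℚ)
          ≤ egyptianBound ((D * x a : ℕ) : ℚ) (R - 1 / x a)⁻¹ (n + 1) ^ 2 ^ (#S - (n + 1)) :=
            ih' i hi
        _ ≤ (egyptianBound (D : ℚ) R⁻¹ s ^ 2 ^ (n + 2 - s)) ^ 2 ^ (#S - (n + 1)) := by
            push_cast
            exact pow_le_pow_left₀ (egyptianBound_nonneg (by positivity) (by positivity) _)
              (egyptianBound_mul_inv_sub_le_pow hRpos hR1 hRD hs hsn (by linarith) (by linarith)) _
        _ = egyptianBound (D : ℚ) R⁻¹ s ^ 2 ^ (#S + 1 - s) := by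
            rw [← pow_mul, ← pow_add]; congr 2; omega
    obtain ⟨j, hj⟩ := hS
    exact forall_mem_insert _ _ _ |>.mpr ⟨(hmin' j hj).trans (hbound j hj), hbound⟩

theorem le_two_pow_two_pow_of_sum_inv_eq_one {ι : Type*} [Fintype ι] {x : ι → ℕ}
    (hx : ∀ i, 0 < x i) (h : ∑ i, (1 : ℚ) / x i = 1) (i : ι) : x i ≤ 2 ^ 2 ^ Fintype.card ι := by
  have hcard : 0 < Fintype.card ι := Fintype.card_pos_iff.mpr ⟨i⟩
  have hbound : (x i : ℚ) ≤ 4 ^ 2 ^ (Fintype.card ι - 1) := by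
    simpa [egyptianBound] using le_egyptianBound_pow_of_sum_inv_eq x univ 1 1 1 1
      (fun i _ => hx i) h le_rfl one_pos ⟨1, by norm_num⟩ one_pos (by norm_num) i (mem_univ i)
  calc x i ≤ 4 ^ 2 ^ (Fintype.card ι - 1) := by exact_mod_cast hbound
    _ = 2 ^ 2 ^ Fintype.card ι := by
      rw [show (4 : ℕ) = 2 ^ 2 by rfl, ← pow_mul, ← pow_succ', Nat.sub_add_cancel hcard]

theorem MulAction.sum_inv_card_stabilizer (G X : Type*) [Group G] [MulAction G X] [Finite G]
    [Finite X] [Fintype (orbitRel.Quotient G X)] :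
    ∑ ω : orbitRel.Quotient G X, (1 : ℚ) / Nat.card (stabilizer G ω.out) =
      Nat.card X / Nat.card G := by
  have hG : (Nat.card G : ℚ) ≠ 0 := by have := Nat.card_pos (α := G); positivity
  rw [eq_div_iff hG, Finset.sum_mul]
  have hX : Nat.card X = ∑ ω : orbitRel.Quotient G X, (stabilizer G ω.out).index := by
    rw [Nat.card_congr (selfEquivSigmaOrbits G X), Nat.card_sigma]
    simp [index_stabilizer, Nat.card_coe_set_eq]
  rw [hX]
  push_cast
  refine Finset.sum_congr rfl fun ω _ => ?_
  rw [← Subgroup.index_mul_card (stabilizer G ω.out)]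
  have : (Nat.card (stabilizer G ω.out) : ℚ) ≠ 0 := by
    have := Nat.card_pos (α := stabilizer G ω.out); positivity
  push_cast
  field_simp

def TwistedConj {G : Type*} [Group G] (_φ : G →* G) : Type _ := G

namespace TwistedConj

variable {G : Type*} [Group G] (φ : G →* G)

def toTwistedConj : G ≃ TwistedConj φ := Equiv.refl G

instance : MulAction G (TwistedConj φ) where
  smul g x := toTwistedConj φ (g * (toTwistedConj φ).symm x * (φ g)⁻¹)
  one_smul x := by simp [HSMul.hSMul]
  mul_smul g h x := by simp [HSMul.hSMul, mul_assoc]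

theorem smul_toTwistedConj (g x : G) :
    g • toTwistedConj φ x = toTwistedConj φ (g * x * (φ g)⁻¹) := rfl

instance [Finite G] : Finite (TwistedConj φ) := ‹Finite G›

theorem orbitRel_toTwistedConj_iff (x y : G) :
    orbitRel G (TwistedConj φ) (toTwistedConj φ x) (toTwistedConj φ y) ↔ twistedConjRel φ x y := by
  simp only [orbitRel_apply, mem_orbit_iff, smul_toTwistedConj, EmbeddingLike.apply_eq_iff_eq,
    twistedConjRel]
  constructor
  · rintro ⟨g, rfl⟩
    exact ⟨g⁻¹, by simp [mul_assoc]⟩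
  · rintro ⟨g, rfl⟩
    exact ⟨g⁻¹, by simp [mul_assoc]⟩

theorem mem_stabilizer_toTwistedConj_one_iff (g : G) :
    g ∈ stabilizer G (toTwistedConj φ 1) ↔ φ g = g := by
  rw [mem_stabilizer_iff, smul_toTwistedConj, EmbeddingLike.apply_eq_iff_eq, mul_one,
    mul_inv_eq_one, eq_comm]

def reidClassesEquiv : ReidClasses G φ ≃ orbitRel.Quotient G (TwistedConj φ) :=
  Quot.congr (toTwistedConj φ) fun x y => (orbitRel_toTwistedConj_iff φ x y).symm

theorem sum_inv_card_stabilizer_eq_one [Finite G]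
    [Fintype (orbitRel.Quotient G (TwistedConj φ))] :
    ∑ ω : orbitRel.Quotient G (TwistedConj φ), (1 : ℚ) / Nat.card (stabilizer G ω.out) = 1 := by
  rw [MulAction.sum_inv_card_stabilizer, Nat.card_congr (toTwistedConj φ).symm]
  exact div_self (Nat.cast_ne_zero.mpr Nat.card_pos.ne')

end TwistedConj

open TwistedConj

/-- **Jabara's lemma.** For an automorphism `φ` of a finite group `F`,
the number of fixed points satisfies `|C(φ)| ≤ 2 ^ (2 ^ R(φ))`. -/
theorem card_fixedPoints_le_of_finite
    {F : Type*} [Group F] [Finite F] (φ : F ≃* F) :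
    Nat.card {g : F // φ g = g}
      ≤ 2 ^ (2 ^ Nat.card (ReidClasses F φ.toMonoidHom)) := by
  let ψ := φ.toMonoidHom
  let _ : Fintype (orbitRel.Quotient F (TwistedConj ψ)) := Fintype.ofFinite _
  let ω : orbitRel.Quotient F (TwistedConj ψ) := ⟦toTwistedConj ψ 1⟧
  have hC : Nat.card {g : F // φ g = g} = Nat.card (stabilizer F ω.out) :=
    calc Nat.card {g : F // φ g = g} = Nat.card (stabilizer F (toTwistedConj ψ 1)) :=
          Nat.card_congr (Equiv.subtypeEquivRight fun g =>
            (mem_stabilizer_toTwistedConj_one_iff ψ g).symm)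
      _ = Nat.card (stabilizer F ω.out) :=
          Nat.card_congr (stabilizerEquivStabilizerOfOrbitRel (Quotient.mk_out _)).symm.toEquiv
  rw [hC, Nat.card_congr (reidClassesEquiv ψ),
    Nat.card_eq_fintype_card (α := orbitRel.Quotient F (TwistedConj ψ))]
  exact le_two_pow_two_pow_of_sum_inv_eq_one (fun _ => Nat.card_pos)
    (sum_inv_card_stabilizer_eq_one ψ) ω
end

section
/- Let G be a group with a finite normal subgroup F such that the quotient A = G/F is abelian of finite Prüfer rank k (i.e., every finitely generated subgroup of A can be generated by at most k elements). Then the number of distinct inner automorphisms of G is at most |F|! · |F|^k; equivalently, the image of the conjugation homomorphism G → Aut(G) has cardinality at most |F|! · |F|^k. -/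
private lemma aux_comm_mul {G : Type*} [Group G] (a x y : G) :
    a * (x * y) * a⁻¹ * (x * y)⁻¹ =
      (a * x * a⁻¹ * x⁻¹) * (x * (a * y * a⁻¹ * y⁻¹) * x⁻¹) := by
  group

private lemma aux_comm_inv {G : Type*} [Group G] (a x : G) :
    a * x⁻¹ * a⁻¹ * x⁻¹⁻¹ = x⁻¹ * (a * x * a⁻¹ * x⁻¹)⁻¹ * x := by
  group

private lemma aux_finite_card_le {α : Type*} (n : ℕ)
    (h : ∀ s : Finset α, s.card ≤ n) : Finite α ∧ Nat.card α ≤ n := by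
  have hfin : Finite α := by
    by_contra hinf
    rw [not_finite_iff_infinite] at hinf
    obtain ⟨s, hs⟩ := Infinite.exists_subset_card_eq α (n + 1)
    have := h s
    omega
  refine ⟨hfin, ?_⟩
  have : Fintype α := Fintype.ofFinite α
  rw [Nat.card_eq_fintype_card, ← Finset.card_univ]
  exact h _

/-- If `G` has a finite normal subgroup `F` with abelian quotient of Prüfer rank at most `k`,
then the group of inner automorphisms of `G` is finite of cardinality at most
`|F|! * |F| ^ k`. -/
theorem card_inner_le_of_finite_by_abelian
    {G : Type*} [Group G] (F : Subgroup G) [F.Normal] [Finite F]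
    (habel : ∀ a b : G ⧸ F, a * b = b * a)
    (k : ℕ)
    (hrk : ∀ H : Subgroup (G ⧸ F), H.FG →
      ∃ S : Finset (G ⧸ F), S.card ≤ k ∧ Subgroup.closure ↑S = H) :
    Finite (MulAut.conj (G := G)).range ∧
    Nat.card (MulAut.conj (G := G)).range
      ≤ (Nat.card F).factorial * (Nat.card F) ^ k := by
  classical
  set Z := Subgroup.center G with hZdef
  set C := Subgroup.centralizer (F : Set G) with hCdef
  have hZC : Z ≤ C := Subgroup.center_le_centralizer _
  -- every commutator lies in F since G/F is abelian
  have hcF : ∀ g x : G, g * x * g⁻¹ * x⁻¹ ∈ F := by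
    intro g x
    rw [← QuotientGroup.eq_one_iff]
    have : ((g * x * g⁻¹ * x⁻¹ : G) : G ⧸ F)
        = (g : G ⧸ F) * x * (g : G ⧸ F)⁻¹ * (x : G ⧸ F)⁻¹ := by
      simp
    rw [this, habel (g : G ⧸ F) (x : G ⧸ F)]
    group
  -- members of C have trivial commutator with F
  have hcC : ∀ a : G, a ∈ C → ∀ u ∈ F, a * u * a⁻¹ * u⁻¹ = 1 := by
    intro a ha u hu
    have h := Subgroup.mem_centralizer_iff.mp ha u hu
    have h2 : a * u * a⁻¹ * u⁻¹ = (a * u) * (u * a)⁻¹ := by group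
    rw [h2, h, mul_inv_cancel]
  ------------------------------------------------------------------
  -- Step 1 : C.index ≤ (Nat.card F)!  and C.index ≠ 0
  ------------------------------------------------------------------
  let π : G →* MulAut F := MulAut.conjNormal (H := F)
  have hker : π.ker = C := by
    ext g
    simp only [MonoidHom.mem_ker]
    constructor
    · intro h
      rw [Subgroup.mem_centralizer_iff]
      intro u hu
      have h3 := MulEquiv.ext_iff.mp h ⟨u, hu⟩
      have h4 := congrArg Subtype.val h3
      simp only [π, MulAut.conjNormal_apply, MulAut.one_apply] at h4
      calc u * g = (g * u * g⁻¹) * g := by rw [h4]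
        _ = g * u := by group
    · intro h
      have h0 := Subgroup.mem_centralizer_iff.mp h
      apply MulEquiv.ext
      rintro ⟨u, hu⟩
      apply Subtype.ext
      simp only [π, MulAut.conjNormal_apply, MulAut.one_apply]
      have h2 := h0 u hu
      calc g * u * g⁻¹ = (u * g) * g⁻¹ := by rw [h2]
        _ = u := by group
  have hCfin : Finite (G ⧸ C) := by
    rw [← hker]
    exact Finite.of_equiv _ (QuotientGroup.quotientKerEquivRange π).symm.toEquiv
  have hCcard : C.index ≤ (Nat.card F).factorial := by
    have h1 : C.index = Nat.card π.range := by
      rw [← hker]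
      exact Nat.card_congr (QuotientGroup.quotientKerEquivRange π).toEquiv
    have h2 : Nat.card π.range ≤ Nat.card (Equiv.Perm F) := by
      exact Nat.card_le_card_of_injective
        (fun e : π.range => MulEquiv.toEquiv (e : MulAut F))
        (fun e₁ e₂ hh => Subtype.ext (MulEquiv.toEquiv_injective hh))
    have h3 : Nat.card (Equiv.Perm F) = (Nat.card F).factorial := by
      have : Fintype F := Fintype.ofFinite _
      simp [Nat.card_eq_fintype_card, Fintype.card_perm]
    omega
  have hCne : C.index ≠ 0 := by
    have : Nat.card (G ⧸ C) ≠ 0 := Nat.card_ne_zero.mpr ⟨⟨QuotientGroup.mk 1⟩, hCfin⟩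
    exact this
  ------------------------------------------------------------------
  -- Step 2 : relindex Z C ≤ (Nat.card F)^k  and finiteness
  ------------------------------------------------------------------
  set Z' := Z.subgroupOf C with hZ'def
  have hFpos : 1 ≤ Nat.card F := Nat.one_le_iff_ne_zero.mpr (Nat.card_ne_zero.mpr ⟨⟨1⟩, ‹_›⟩)
  have hrep : ∀ q : C ⧸ Z', ∃ g : C, (g : C ⧸ Z') = q := QuotientGroup.mk_surjective
  choose rep hrepeq using hrep
  have key : ∀ p q : C ⧸ Z', p ≠ q → ∃ x : G,
      (rep p : G) * x * (rep p : G)⁻¹ * x⁻¹ ≠ (rep q : G) * x * (rep q : G)⁻¹ * x⁻¹ := by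
    intro p q hpq
    by_contra hall
    push_neg at hall
    apply hpq
    rw [← hrepeq p, ← hrepeq q, QuotientGroup.eq]
    rw [hZ'def, Subgroup.mem_subgroupOf]
    apply Subgroup.mem_center_iff.mpr
    intro x
    set a : G := (rep p : G)
    set b : G := (rep q : G)
    have h' : a * x * a⁻¹ = b * x * b⁻¹ := mul_right_cancel (hall x)
    have hco : ((rep p)⁻¹ * rep q : C) = (a⁻¹ * b : G) := by push_cast; rfl
    rw [hco]
    calc x * (a⁻¹ * b) = a⁻¹ * (a * x * a⁻¹) * b := by group
      _ = a⁻¹ * (b * x * b⁻¹) * b := by rw [h']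
      _ = a⁻¹ * b * x := by group
  choose! xsel hxsel using key
  have hbound : ∀ s : Finset (C ⧸ Z'), s.card ≤ Nat.card F ^ k := by
    intro s
    set T0 : Finset (G ⧸ F) :=
      (s ×ˢ s).image (fun pq => ((xsel pq.1 pq.2 : G) : G ⧸ F)) with hT0
    obtain ⟨S, hScard, hSclos⟩ := hrk (Subgroup.closure (T0 : Set (G ⧸ F))) ⟨T0, rfl⟩
    have hy : ∀ z : G ⧸ F, ∃ g : G, (g : G ⧸ F) = z := QuotientGroup.mk_surjective
    choose y hyeq using hy
    -- the map recording commutator values on the generators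
    let Φ : {q // q ∈ s} → ({z // z ∈ S} → F) := fun q z =>
      ⟨(rep q.1 : G) * y z.1 * (rep q.1 : G)⁻¹ * (y z.1)⁻¹, hcF _ _⟩
    have hΦ : Function.Injective Φ := by
      intro p q heq2
      by_contra hne
      have hpq : p.1 ≠ q.1 := fun h => hne (Subtype.ext h)
      set a : G := (rep p.1 : G) with hadef
      set b : G := (rep q.1 : G) with hbdef
      have haC : a ∈ C := (rep p.1).2
      have hbC : b ∈ C := (rep q.1).2
      let D : Subgroup G :=
        { carrier := {x : G | a * x * a⁻¹ * x⁻¹ = b * x * b⁻¹ * x⁻¹}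
          one_mem' := by simp
          mul_mem' := by
            intro x y hx hy
            simp only [Set.mem_setOf_eq] at *
            rw [aux_comm_mul a x y, aux_comm_mul b x y, hx, hy]
          inv_mem' := by
            intro x hx
            simp only [Set.mem_setOf_eq] at *
            rw [aux_comm_inv a x, aux_comm_inv b x, hx] }
      have hFD : F ≤ D := by
        intro u hu
        show a * u * a⁻¹ * u⁻¹ = b * u * b⁻¹ * u⁻¹
        rw [hcC a haC u hu, hcC b hbC u hu]
      have hyD : ∀ z ∈ S, y z ∈ D := by
        intro z hz
        have := congrArg Subtype.val (congrFun heq2 ⟨z, hz⟩)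
        exact this
      have hclos : Subgroup.closure (S : Set (G ⧸ F)) ≤ D.map (QuotientGroup.mk' F) := by
        rw [Subgroup.closure_le]
        intro z hz
        exact ⟨y z, hyD z hz, hyeq z⟩
      set xv : G := xsel p.1 q.1 with hxv
      have hxT0 : ((xv : G) : G ⧸ F) ∈ (T0 : Set (G ⧸ F)) := by
        simp only [hT0, Finset.coe_image, Set.mem_image]
        exact ⟨(p.1, q.1), Finset.mem_product.mpr ⟨p.2, q.2⟩, rfl⟩
      have hxH : ((xv : G) : G ⧸ F) ∈ Subgroup.closure (S : Set (G ⧸ F)) := by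
        rw [hSclos]
        exact Subgroup.subset_closure hxT0
      obtain ⟨d, hd, hdx⟩ := hclos hxH
      have hdf : d⁻¹ * xv ∈ F := QuotientGroup.eq.mp hdx
      have hxD : xv ∈ D := by
        have : xv = d * (d⁻¹ * xv) := by group
        rw [this]
        exact D.mul_mem hd (hFD hdf)
      exact hxsel p.1 q.1 hpq hxD
    have h1 : Nat.card {q // q ∈ s} ≤ Nat.card ({z // z ∈ S} → F) :=
      Nat.card_le_card_of_injective Φ hΦ
    rw [Nat.card_eq_finsetCard] at h1
    rw [Nat.card_fun, Nat.card_eq_finsetCard] at h1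
    calc s.card ≤ Nat.card F ^ S.card := h1
      _ ≤ Nat.card F ^ k := Nat.pow_le_pow_right hFpos hScard
  obtain ⟨hQfin, hQcard⟩ := aux_finite_card_le (Nat.card F ^ k) hbound
  have hrel_eq : Z.relIndex C = Nat.card (C ⧸ Z') := rfl
  have hrelle : Z.relIndex C ≤ Nat.card F ^ k := by rw [hrel_eq]; exact hQcard
  have hrelne : Z.relIndex C ≠ 0 := by
    rw [hrel_eq]
    exact Nat.card_ne_zero.mpr ⟨⟨QuotientGroup.mk 1⟩, hQfin⟩
  ------------------------------------------------------------------
  -- Step 3 : assemble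
  ------------------------------------------------------------------
  have hconjker : (MulAut.conj (G := G)).ker = Z := by
    ext g
    simp only [MonoidHom.mem_ker]
    constructor
    · intro h
      apply Subgroup.mem_center_iff.mpr
      intro x
      have h3 := MulEquiv.ext_iff.mp h x
      simp only [MulAut.conj_apply, MulAut.one_apply] at h3
      calc x * g = (g * x * g⁻¹) * g := by rw [h3]
        _ = g * x := by group
    · intro h
      apply MulEquiv.ext
      intro x
      have h2 := Subgroup.mem_center_iff.mp h x
      simp only [MulAut.conj_apply, MulAut.one_apply]
      calc g * x * g⁻¹ = (x * g) * g⁻¹ := by rw [← h2]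
        _ = x := by group
  have hiso : Nat.card (MulAut.conj (G := G)).range = Z.index := by
    have := Nat.card_congr (QuotientGroup.quotientKerEquivRange (MulAut.conj (G := G))).toEquiv
    rw [← this, hconjker]
    rfl
  have hZindex : Z.relIndex C * C.index = Z.index := Subgroup.relIndex_mul_index hZC
  have hZne : Z.index ≠ 0 := by
    rw [← hZindex]
    exact Nat.mul_ne_zero hrelne hCne
  have hfin : Finite (MulAut.conj (G := G)).range := by
    have hne : Nat.card (MulAut.conj (G := G)).range ≠ 0 := by rw [hiso]; exact hZne
    exact (Nat.card_ne_zero.mp hne).2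
  refine ⟨hfin, ?_⟩
  rw [hiso, ← hZindex, mul_comm]
  exact Nat.mul_le_mul hCcard hrelle
end

section
/- Let G be a group with only finitely many distinct inner automorphisms (equivalently, the center of G has finite index), and let φ : G → G be an automorphism with finite Reidemeister number R(φ). Then there exist a finite group F, an automorphism ψ : F → F, and a surjective group homomorphism p : G → F satisfying p ∘ φ = ψ ∘ p, such that the induced map sending the Reidemeister class of x under φ to the Reidemeister class of p(x) under ψ is a bijection between the set of Reidemeister classes of φ and the set of Reidemeister classes of ψ. -/
/-- `F` (a finite group) together with an automorphism `ψ` and an equivariant surjection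
`p : G → F` witnesses the TBFT_f for `φ`: `p` induces a bijection of Reidemeister classes. -/
def ReidBijOntoFinite (G : Type*) [Group G] (φ : G →* G) (F : Type) [Group F] : Prop :=
  Finite F ∧ ∃ (ψ : F ≃* F) (p : G →* F), Function.Surjective p ∧
    (∀ g : G, p (φ g) = ψ (p g)) ∧
    ∃ b : ReidClasses G φ ≃ ReidClasses F ψ.toMonoidHom,
      ∀ x : G, b (Quot.mk (twistedConjRel φ) x)
        = Quot.mk (twistedConjRel ψ.toMonoidHom) (p x)

section Aux

variable {G : Type*} [Group G]

lemma twistedConjRel_equivalence_s11 (φ : G ≃* G) :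
    Equivalence (twistedConjRel φ.toMonoidHom) := by
  constructor
  · intro x; exact ⟨1, by simp⟩
  · rintro x y ⟨g, rfl⟩
    exact ⟨g⁻¹, by simp [mul_assoc]⟩
  · rintro x y z ⟨g, rfl⟩ ⟨h, rfl⟩
    refine ⟨h * g, ?_⟩
    simp [mul_assoc]

lemma twistedConj_mk_eq_iff (φ : G ≃* G) {x y : G} :
    Quot.mk (twistedConjRel φ.toMonoidHom) x = Quot.mk (twistedConjRel φ.toMonoidHom) y ↔
      twistedConjRel φ.toMonoidHom x y :=
  ⟨fun h => ((twistedConjRel_equivalence_s11 φ).eqvGen_iff).mp (Quot.eqvGen_exact h), Quot.sound⟩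

lemma conj_ker_eq_center : (MulAut.conj (G := G)).ker = Subgroup.center G := by
  ext g
  simp only [MonoidHom.mem_ker, Subgroup.mem_center_iff]
  constructor
  · intro h x
    have hx := DFunLike.congr_fun h x
    simp only [MulAut.conj_apply, MulAut.one_apply] at hx
    conv_lhs => rw [← hx]
    group
  · intro h
    ext x
    simp only [MulAut.conj_apply, MulAut.one_apply]
    conv_lhs => rw [← h x]
    group

end Aux

/-- If `G` has only finitely many inner automorphisms, then every automorphism of `G`
with finite Reidemeister number admits an equivariant epimorphism onto a finite group
inducing a bijection of Reidemeister classes. -/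
theorem tbft_f_of_finitely_many_inner
    {G : Type*} [Group G] (hinn : Finite (MulAut.conj (G := G)).range)
    (φ : G ≃* G) (hR : Finite (ReidClasses G φ.toMonoidHom)) :
    ∃ (F : Type) (instF : Group F),
      @ReidBijOntoFinite G _ φ.toMonoidHom F instF := by
  classical
  haveI hRQ : Finite (Quot (twistedConjRel φ.toMonoidHom)) := hR
  set Z := Subgroup.center G with hZdef
  have hcomm : ∀ {z : G}, z ∈ Z → ∀ g : G, g * z = z * g :=
    fun hz g => Subgroup.mem_center_iff.mp hz g
  have hφZ : ∀ {z : G}, z ∈ Z → φ z ∈ Z := by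
    intro z hz
    rw [Subgroup.mem_center_iff]
    intro g
    calc g * φ z = φ (φ.symm g * z) := by simp
    _ = φ (z * φ.symm g) := by rw [hcomm hz]
    _ = φ z * g := by simp
  -- the map ν g = g * φ(g)⁻¹
  set ν : G → G := fun g => g * (φ g)⁻¹ with hν
  -- if ν g is central then φ g "commutes with" g
  have hφg_comm : ∀ {g : G}, ν g ∈ Z → φ g * g⁻¹ = g⁻¹ * φ g := by
    intro g hg
    have h1 : g * ν g = ν g * g := hcomm hg g
    simp only [hν] at h1
    have h2 : g * (φ g)⁻¹ = (φ g)⁻¹ * g := by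
      apply mul_left_cancel (a := g)
      rw [h1]
      group
    have h3 := congrArg (·⁻¹) h2
    simp only [mul_inv_rev, inv_inv] at h3
    exact h3
  have hνinv : ∀ {g : G}, ν g ∈ Z → (ν g)⁻¹ = ν g⁻¹ := by
    intro g hg
    have : (ν g)⁻¹ = φ g * g⁻¹ := by simp only [hν]; group
    rw [this, hφg_comm hg]
    simp only [hν, map_inv, inv_inv]
  have hνmul : ∀ {z : G}, z ∈ Z → ∀ g : G, ν (g * z) = ν z * ν g := by
    intro z hz g
    have hzK : ν z ∈ Z := mul_mem hz (inv_mem (hφZ hz))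
    have h1 : ν (g * z) = g * ν z * (φ g)⁻¹ := by
      simp only [hν, map_mul, mul_inv_rev]
      group
    rw [h1, hcomm hzK g]
    simp only [hν]
    group
  -- K = ν(Z)
  set K : Subgroup G :=
    { carrier := {x | ∃ z ∈ Z, x = ν z}
      one_mem' := ⟨1, Subgroup.one_mem _, by simp only [hν]; simp⟩
      mul_mem' := by
        rintro a b ⟨z, hz, rfl⟩ ⟨w, hw, rfl⟩
        exact ⟨w * z, mul_mem hw hz, (hνmul hz w).symm⟩
      inv_mem' := by
        rintro a ⟨z, hz, rfl⟩
        refine ⟨z⁻¹, inv_mem hz, ?_⟩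
        exact hνinv (mul_mem hz (inv_mem (hφZ hz))) } with hK
  have hKZ : K ≤ Z := by
    rintro x ⟨z, hz, rfl⟩
    exact mul_mem hz (inv_mem (hφZ hz))
  have hKnormal : K.Normal := by
    constructor
    intro k hk g
    have : g * k * g⁻¹ = k := by
      rw [hcomm (hKZ hk) g]; group
    rwa [this]
  have hKmap : K.map φ.toMonoidHom = K := by
    apply le_antisymm
    · rintro x ⟨y, ⟨z, hz, rfl⟩, rfl⟩
      exact ⟨φ z, hφZ hz, by simp [hν]⟩
    · rintro x ⟨z, hz, rfl⟩
      have hsymmZ : φ.symm z ∈ Z := by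
        rw [Subgroup.mem_center_iff]
        intro g
        calc g * φ.symm z = φ.symm (φ g * z) := by simp
        _ = φ.symm (z * φ g) := by rw [hcomm hz]
        _ = φ.symm z * g := by simp
      refine ⟨ν (φ.symm z), ⟨φ.symm z, hsymmZ, rfl⟩, ?_⟩
      simp [hν]
  -- D = ν(G) ∩ Z
  set D : Subgroup G :=
    { carrier := {x | x ∈ Z ∧ ∃ g : G, x = ν g}
      one_mem' := ⟨Subgroup.one_mem _, 1, by simp only [hν]; simp⟩
      mul_mem' := by
        rintro a b ⟨haZ, g, rfl⟩ ⟨hbZ, h, rfl⟩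
        refine ⟨mul_mem haZ hbZ, h * g, ?_⟩
        have h1 : ν (h * g) = h * ν g * (φ h)⁻¹ := by
          simp only [hν, map_mul, mul_inv_rev]
          group
        have h2 : ν (h * g) = ν g * ν h := by
          rw [h1, hcomm haZ h]
          simp only [hν]
          group
        exact h2.symm
      inv_mem' := by
        rintro a ⟨haZ, g, rfl⟩
        exact ⟨inv_mem haZ, g⁻¹, (hνinv haZ).symm ▸ (hνinv haZ)⟩ } with hD
  have hKD : K ≤ D := by
    rintro x ⟨z, hz, rfl⟩
    exact ⟨hKZ ⟨z, hz, rfl⟩, z, rfl⟩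
  -- Finiteness of G ⧸ Z
  have hGZfin : Finite (G ⧸ Z) := by
    rw [hZdef, ← conj_ker_eq_center]
    exact Finite.of_equiv _ (QuotientGroup.quotientKerEquivRange _).toEquiv.symm
  -- Finiteness of Z ⧸ D
  have hZDfin : Finite (Z ⧸ D.subgroupOf Z) := by
    set f0 : Z → ReidClasses G φ.toMonoidHom :=
      fun z => Quot.mk (twistedConjRel φ.toMonoidHom) (z : G) with hf0
    have hwd : ∀ a b : Z, (QuotientGroup.leftRel (D.subgroupOf Z)) a b → f0 a = f0 b := by
      intro a b hab
      have h1 : ((a⁻¹ * b : Z) : G) ∈ D :=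
        Subgroup.mem_subgroupOf.mp (QuotientGroup.leftRel_apply.mp hab)
      obtain ⟨hZm, g, hg⟩ := h1
      have hg' : (b : G) = (a : G) * ν g := by
        have h2 : (a : G)⁻¹ * (b : G) = ν g := by
          rw [← hg]; push_cast; ring_nf
        rw [← h2]; group
      apply Quot.sound
      refine ⟨g, ?_⟩
      show (b : G) = g * (a : G) * (φ.toMonoidHom g)⁻¹
      rw [hg']
      simp only [hν, MulEquiv.toMonoidHom_eq_coe, MonoidHom.coe_coe]
      rw [← mul_assoc, ← hcomm a.2 g]
    have hinj2 : ∀ a b : Z, f0 a = f0 b → (QuotientGroup.leftRel (D.subgroupOf Z)) a b := by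
      intro a b h
      obtain ⟨g, hg⟩ := (twistedConj_mk_eq_iff φ).mp h
      simp only [MulEquiv.toMonoidHom_eq_coe, MonoidHom.coe_coe] at hg
      have hab : (a : G)⁻¹ * (b : G) = ν g := by
        rw [hg]
        simp only [hν]
        rw [hcomm a.2 g]
        group
      rw [QuotientGroup.leftRel_apply]
      apply Subgroup.mem_subgroupOf.mpr
      refine ⟨(a⁻¹ * b : Z).2, g, ?_⟩
      push_cast
      exact hab
    have hfi : Function.Injective
        (fun q : Z ⧸ D.subgroupOf Z => Quotient.liftOn' q f0 hwd) := by
      intro q1 q2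
      refine Quotient.inductionOn₂' q1 q2 ?_
      intro a b h
      exact Quotient.sound' (hinj2 a b h)
    exact Finite.of_injective _ hfi
  -- H = ν⁻¹(Z)
  set H : Subgroup G :=
    { carrier := {g | ν g ∈ Z}
      one_mem' := by
        show ν 1 ∈ Z
        have : ν 1 = 1 := by simp only [hν]; simp
        rw [this]; exact Subgroup.one_mem _
      mul_mem' := by
        intro a b ha hb
        show ν (a * b) ∈ Z
        have h1 : ν (a * b) = a * ν b * (φ a)⁻¹ := by
          simp only [hν, map_mul, mul_inv_rev]
          group
        have h2 : ν (a * b) = ν b * ν a := by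
          rw [h1, hcomm hb a]
          simp only [hν]
          group
        rw [h2]
        exact mul_mem hb ha
      inv_mem' := by
        intro a ha
        show ν a⁻¹ ∈ Z
        rw [← hνinv ha]
        exact inv_mem ha } with hH
  have hZH : Z ≤ H := by
    intro z hz
    show ν z ∈ Z
    exact mul_mem hz (inv_mem (hφZ hz))
  -- Finiteness of H ⧸ Z
  have hHZfin : Finite (H ⧸ Z.subgroupOf H) := by
    set f0 : H → G ⧸ Z := fun h => QuotientGroup.mk (h : G) with hf0
    have hwd : ∀ a b : H, (QuotientGroup.leftRel (Z.subgroupOf H)) a b → f0 a = f0 b := by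
      intro a b hab
      have h1 : ((a⁻¹ * b : H) : G) ∈ Z :=
        Subgroup.mem_subgroupOf.mp (QuotientGroup.leftRel_apply.mp hab)
      apply QuotientGroup.eq.mpr
      simpa using h1
    have hfi : Function.Injective
        (fun q : H ⧸ Z.subgroupOf H => Quotient.liftOn' q f0 hwd) := by
      intro q1 q2
      refine Quotient.inductionOn₂' q1 q2 ?_
      intro a b h
      have h2 : (a : G)⁻¹ * (b : G) ∈ Z := QuotientGroup.eq.mp h
      apply Quotient.sound'
      rw [QuotientGroup.leftRel_apply]
      apply Subgroup.mem_subgroupOf.mpr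
      simpa using h2
    exact Finite.of_injective _ hfi
  -- Finiteness of D ⧸ K (within Z)
  have hDKfin : Finite ((D.subgroupOf Z) ⧸ (K.subgroupOf Z).subgroupOf (D.subgroupOf Z)) := by
    have hc0mem : ∀ h : H, (⟨ν (h : G), h.2⟩ : Z) ∈ D.subgroupOf Z := by
      intro h
      apply Subgroup.mem_subgroupOf.mpr
      exact ⟨h.2, (h : G), rfl⟩
    set c0 : H → D.subgroupOf Z := fun h => ⟨⟨ν (h : G), h.2⟩, hc0mem h⟩ with hc0
    set c : H → (D.subgroupOf Z) ⧸ (K.subgroupOf Z).subgroupOf (D.subgroupOf Z) :=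
      fun h => Quotient.mk'' (c0 h) with hc
    have hwd : ∀ a b : H, (QuotientGroup.leftRel (Z.subgroupOf H)) a b → c a = c b := by
      intro a b hab
      have hwZ : (a : G)⁻¹ * (b : G) ∈ Z := by
        have := Subgroup.mem_subgroupOf.mp (QuotientGroup.leftRel_apply.mp hab)
        simpa using this
      set w : G := (a : G)⁻¹ * (b : G) with hw
      have hνwZ : ν w ∈ Z := mul_mem hwZ (inv_mem (hφZ hwZ))
      have key : ν (b : G) = ν w * ν (a : G) := by
        have hb : (b : G) = (a : G) * w := by rw [hw]; group
        rw [hb]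
        exact hνmul hwZ (a : G)
      have hmem : (ν (a : G))⁻¹ * ν (b : G) = ν w := by
        rw [key, ← hcomm hνwZ (ν (a : G))]
        group
      apply Quotient.sound'
      rw [QuotientGroup.leftRel_apply]
      apply Subgroup.mem_subgroupOf.mpr
      apply Subgroup.mem_subgroupOf.mpr
      show ((((c0 a)⁻¹ * c0 b : D.subgroupOf Z) : Z) : G) ∈ K
      have hval : ((((c0 a)⁻¹ * c0 b : D.subgroupOf Z) : Z) : G)
          = (ν (a : G))⁻¹ * ν (b : G) := rfl
      rw [hval, hmem]
      exact ⟨w, hwZ, rfl⟩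
    have hsurj : Function.Surjective
        (fun q : H ⧸ Z.subgroupOf H => Quotient.liftOn' q c hwd) := by
      intro q
      refine Quotient.inductionOn' q ?_
      intro d
      obtain ⟨hdZ, g, hg⟩ := Subgroup.mem_subgroupOf.mp d.2
      have hgH : g ∈ H := by
        show ν g ∈ Z
        rw [← hg]
        exact (d : Z).2
      refine ⟨Quotient.mk'' ⟨g, hgH⟩, ?_⟩
      have : c0 ⟨g, hgH⟩ = d := by
        apply Subtype.ext
        apply Subtype.ext
        exact hg.symm
      show c ⟨g, hgH⟩ = Quotient.mk'' d
      rw [hc]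
      simp only
      rw [this]
    exact Finite.of_surjective _ hsurj
  -- Finiteness of Z ⧸ K
  have hZKfin : Finite (Z ⧸ K.subgroupOf Z) := by
    have hle : K.subgroupOf Z ≤ D.subgroupOf Z := fun x hx => hKD hx
    exact Finite.of_equiv _ (Subgroup.quotientEquivProdOfLE hle).symm
  -- Finiteness of G ⧸ K
  have hGKfin : Finite (G ⧸ K) :=
    Finite.of_equiv _ (Subgroup.quotientEquivProdOfLE hKZ).symm
  -- the finite quotient in Type 0
  have hsmall : Small.{0} (G ⧸ K) := Countable.toSmall _
  refine ⟨Shrink.{0} (G ⧸ K), inferInstance, ?_⟩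
  constructor
  · exact Finite.of_equiv _ (equivShrink (G ⧸ K))
  · set e : Shrink.{0} (G ⧸ K) ≃* (G ⧸ K) := Shrink.mulEquiv with he
    set ψ₀ : (G ⧸ K) ≃* (G ⧸ K) := QuotientGroup.congr K K φ hKmap with hψ₀
    set ψ : Shrink.{0} (G ⧸ K) ≃* Shrink.{0} (G ⧸ K) := (e.trans ψ₀).trans e.symm with hψ
    set p : G →* Shrink.{0} (G ⧸ K) := e.symm.toMonoidHom.comp (QuotientGroup.mk' K) with hp
    have hpsurj : Function.Surjective p :=
      e.symm.surjective.comp (QuotientGroup.mk'_surjective K)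
    have hpmk : ∀ g : G, p g = e.symm (QuotientGroup.mk g) := fun g => rfl
    have hequiv : ∀ g : G, p (φ g) = ψ (p g) := by
      intro g
      show e.symm (QuotientGroup.mk (φ g)) = e.symm (ψ₀ (e (e.symm (QuotientGroup.mk g))))
      rw [e.apply_symm_apply]
      congr 1
    have hψcoe : ∀ x, ψ.toMonoidHom x = ψ x := fun x => rfl
    have hker : ∀ {a b : G}, p a = p b ↔ a⁻¹ * b ∈ K := by
      intro a b
      rw [hpmk, hpmk, e.symm.injective.eq_iff]
      exact QuotientGroup.eq
    -- the induced map on Reidemeister classes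
    have hsound : ∀ x y : G, twistedConjRel φ.toMonoidHom x y →
        Quot.mk (twistedConjRel ψ.toMonoidHom) (p x)
          = Quot.mk (twistedConjRel ψ.toMonoidHom) (p y) := by
      rintro x y ⟨g, rfl⟩
      refine Quot.sound ⟨p g, ?_⟩
      show p (g * x * (φ.toMonoidHom g)⁻¹) = p g * p x * (ψ.toMonoidHom (p g))⁻¹
      rw [hψcoe, ← hequiv]
      simp only [MulEquiv.toMonoidHom_eq_coe, MonoidHom.coe_coe, map_mul, map_inv]
    set bf : ReidClasses G φ.toMonoidHom → ReidClasses (Shrink.{0} (G ⧸ K)) ψ.toMonoidHom :=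
      Quot.lift (fun x => Quot.mk (twistedConjRel ψ.toMonoidHom) (p x)) hsound with hbf
    have hbij : Function.Bijective bf := by
      constructor
      · intro q1 q2
        induction q1 using Quot.ind
        induction q2 using Quot.ind
        rename_i x y
        intro h
        obtain ⟨q, hq⟩ := (twistedConj_mk_eq_iff ψ).mp h
        obtain ⟨g, rfl⟩ := hpsurj q
        rw [hψcoe, ← hequiv, ← map_inv, ← map_mul, ← map_mul] at hq
        have hKy : (g * x * (φ g)⁻¹)⁻¹ * y ∈ K := by
          apply hker.mp
          exact hq.symm
        obtain ⟨z, hz, hzy⟩ := hKy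
        apply Quot.sound
        refine ⟨g * z, ?_⟩
        have hy : y = g * x * (φ g)⁻¹ * (z * (φ z)⁻¹) := by
          have h2 : (g * x * (φ g)⁻¹)⁻¹ * y = z * (φ z)⁻¹ := hzy
          rw [← h2]; group
        show y = g * z * x * (φ.toMonoidHom (g * z))⁻¹
        simp only [MulEquiv.toMonoidHom_eq_coe, MonoidHom.coe_coe, map_mul, mul_inv_rev]
        rw [hy]
        calc g * x * (φ g)⁻¹ * (z * (φ z)⁻¹)
            = g * x * ((z * (φ z)⁻¹) * (φ g)⁻¹) := by
              rw [← hcomm (mul_mem hz (inv_mem (hφZ hz))) (φ g)⁻¹]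
              group
          _ = g * (x * z) * ((φ z)⁻¹ * (φ g)⁻¹) := by group
          _ = g * (z * x) * ((φ z)⁻¹ * (φ g)⁻¹) := by rw [← hcomm hz x]
          _ = g * z * x * ((φ z)⁻¹ * (φ g)⁻¹) := by group
      · intro q
        induction q using Quot.ind
        rename_i f
        obtain ⟨a, rfl⟩ := hpsurj f
        exact ⟨Quot.mk _ a, rfl⟩
    exact ⟨ψ, p, hpsurj, hequiv, Equiv.ofBijective bf hbij, fun x => rfl⟩
end

section
/- Let A be a torsion-free abelian group of finite Prüfer rank (every finitely generated subgroup of A can be generated by at most r elements, for some fixed r) and let φ : A → A be an automorphism whose Reidemeister number is finite, i.e., the quotient of A by the image of the endomorphism a ↦ a - φ(a) is finite. Then φ has no nontrivial fixed points: C(φ) = {0}. -/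
/-!
Put `ψ = 1 - φ` and let `n` be the (finite, nonzero) index of `range ψ`, so that `n • A ⊆ range ψ`.
Starting from a fixed point `a = b₀`, choose `b₁, b₂, …` with `ψ bₖ₊₁ = n • bₖ`. Then
`ψᵏ bₖ = nᵏ • a` while `ψᵏ⁺¹ bₖ = nᵏ • ψ a = 0`, so `ψ` acts on the `bₖ` like a nilpotent Jordan
block. If `a ≠ 0`, torsion-freeness makes `b₀, …, b_r` linearly independent over `ℤ`, which is
impossible in a group of Prüfer rank at most `r`.
-/

def HasPruferRankLE (A : Type*) [AddCommGroup A] (r : ℕ) : Prop :=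
  ∀ H : AddSubgroup A, H.FG → ∃ S : Finset A, S.card ≤ r ∧ AddSubgroup.closure ↑S = H

theorem HasPruferRankLE.card_le_of_linearIndependent {A : Type*} [AddCommGroup A] {r : ℕ}
    (hA : HasPruferRankLE A r) {ι : Type*} [Fintype ι] {v : ι → A}
    (hv : LinearIndependent ℤ v) : Fintype.card ι ≤ r := by
  obtain ⟨S, hS, hclosure⟩ := hA (AddSubgroup.closure (Set.range v))
    ((AddSubgroup.fg_iff _).mpr ⟨Set.range v, rfl, Set.finite_range v⟩)
  have hspan : Set.range v ≤ Submodule.span ℤ (S : Set A) := fun x hx => by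
    rw [SetLike.mem_coe, ← Submodule.mem_toAddSubgroup, Submodule.span_int_eq_addSubgroupClosure,
      hclosure]
    exact AddSubgroup.subset_closure hx
  calc Fintype.card ι ≤ Fintype.card (S : Set A) := linearIndependent_le_span_aux' v hv _ hspan
    _ = S.card := Fintype.card_coe S
    _ ≤ r := hS

theorem IsAddTorsionFree.of_nsmul_eq_zero {A : Type*} [AddCommGroup A]
    (h : ∀ (a : A) (n : ℕ), n ≠ 0 → n • a = 0 → a = 0) : IsAddTorsionFree A :=
  ⟨fun n hn x y hxy => sub_eq_zero.mp (h _ n hn (by simpa [nsmul_sub, sub_eq_zero] using hxy))⟩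

namespace Module.End

section Chain

variable {R M : Type*} [Semiring R] [AddCommMonoid M] [Module R M] (f : Module.End R M) (c : R)

theorem exists_chain_of_forall_smul_mem_range (hc : ∀ x, c • x ∈ LinearMap.range f) (a : M) :
    ∃ b : ℕ → M, b 0 = a ∧ ∀ k, f (b (k + 1)) = c • b k := by
  choose g hg using hc
  exact ⟨fun k => Nat.rec a (fun _ y => g y) k, rfl, fun k => hg _⟩

variable {f c} {b : ℕ → M}

theorem pow_apply_chain (hb : ∀ k, f (b (k + 1)) = c • b k) (k : ℕ) :
    (f ^ k) (b k) = c ^ k • b 0 := by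
  induction k with
  | zero => simp
  | succ k ih =>
    rw [pow_succ, mul_apply, hb, map_smul, ih, smul_smul, ← pow_succ']

theorem pow_apply_chain_eq_zero (hb : ∀ k, f (b (k + 1)) = c • b k) (h0 : f (b 0) = 0)
    {i j : ℕ} (hij : i < j) :
    (f ^ j) (b i) = 0 := by
  refine pow_map_zero_of_le hij ?_
  rw [pow_succ', mul_apply, pow_apply_chain hb, map_smul, h0, smul_zero]

end Chain

theorem linearIndependent_of_pow_apply_triangular {R M : Type*} [Ring R] [AddCommGroup M]
    [Module R M] [IsCancelMulZero R] [Module.IsTorsionFree R M] (f : Module.End R M) {b : ℕ → M}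
    (hvanish : ∀ ⦃i j⦄, i < j → (f ^ j) (b i) = 0) (hne : ∀ i, (f ^ i) (b i) ≠ 0) :
    LinearIndependent R b := by
  rw [linearIndependent_iff']
  intro s
  induction s using Finset.induction_on_max with
  | empty => simp
  | insert m s hlt ih =>
    intro g hg
    rw [Finset.sum_insert fun hm => lt_irrefl m (hlt m hm)] at hg
    have hgm : g m = 0 := by
      have h := congrArg (f ^ m) hg
      rw [map_add, map_sum, Finset.sum_eq_zero fun i hi => by rw [map_smul, hvanish (hlt i hi),
        smul_zero], add_zero, map_smul, map_zero] at h
      exact (smul_eq_zero.mp h).resolve_right (hne m)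
    rw [hgm, zero_smul, zero_add] at hg
    intro i hi
    rcases Finset.mem_insert.mp hi with rfl | hi
    · exact hgm
    · exact ih g hg i hi

end Module.End

/-- An automorphism of a torsion-free abelian group of finite Prüfer rank with finite
Reidemeister number (i.e. finite cokernel of `1 - φ`) has no nontrivial fixed points. -/
theorem fixedPoints_trivial_of_torsionFree
    {A : Type*} [AddCommGroup A] (r : ℕ)
    (hrk : ∀ H : AddSubgroup A, H.FG →
      ∃ S : Finset A, S.card ≤ r ∧ AddSubgroup.closure ↑S = H)
    (htf : ∀ (a : A) (n : ℕ), n ≠ 0 → n • a = 0 → a = 0)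
    (φ : A ≃+ A)
    (hR : Finite (A ⧸ (AddMonoidHom.id A - φ.toAddMonoidHom).range)) :
    ∀ a : A, φ a = a → a = 0 := by
  intro a ha
  by_contra ha0
  have : IsAddTorsionFree A := .of_nsmul_eq_zero htf
  set H := (AddMonoidHom.id A - φ.toAddMonoidHom).range
  set ψ : Module.End ℤ A := (AddMonoidHom.id A - φ.toAddMonoidHom).toIntLinearMap
  have hψa : ψ a = 0 := sub_eq_zero.mpr ha.symm
  have hn : H.index ≠ 0 := AddSubgroup.index_ne_zero_of_finite
  obtain ⟨b, hb0, hb⟩ := ψ.exists_chain_of_forall_smul_mem_range (H.index : ℤ)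
    (fun x => by rw [natCast_zsmul]; exact H.nsmul_index_mem x) a
  have hli : LinearIndependent ℤ b := by
    refine ψ.linearIndependent_of_pow_apply_triangular
      (fun _ _ => Module.End.pow_apply_chain_eq_zero hb (hb0 ▸ hψa)) fun i => ?_
    rw [Module.End.pow_apply_chain hb, hb0]
    exact smul_ne_zero (pow_ne_zero _ (Int.natCast_ne_zero.mpr hn)) ha0
  simpa using HasPruferRankLE.card_le_of_linearIndependent hrk
    (hli.comp (Fin.val : Fin (r + 1) → ℕ) Fin.val_injective)
end

section
/- Let p be a prime, let G be the direct sum of d copies of the Prüfer quasicyclic group ℤ(p^∞), and let H be a subgroup of G. Then either H is finite, or the quotient G/H is isomorphic to the direct sum of d' copies of ℤ(p^∞) for some d' < d. -/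
/-- The group `ℚ/ℤ`. -/
abbrev QModZ : Type := ℚ ⧸ AddSubgroup.zmultiples (1 : ℚ)

/-- The Prüfer quasicyclic `p`-group `ℤ(p^∞)`, realized as the `p`-primary component
of `ℚ/ℤ` (the subgroup of elements of `p`-power order). -/
abbrev ZpInfty (p : ℕ) [Fact p.Prime] : AddSubgroup QModZ :=
  AddCommGroup.primaryComponent QModZ p

/-!
A `p`-primary, `p`-divisible abelian group whose socle `A[p]` has order `p ^ k` is isomorphic
to `ℤ(p^∞)^k`: such a group is divisible, hence injective, so an isomorphism of socles
`ℤ(p^∞)^k[p] ≃ A[p]` extends to a homomorphism `ℤ(p^∞)^k → A`, which is injective because its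
kernel meets the socle trivially and surjective by induction on the order of elements.

Quotienting such a group `A` by a finite subgroup does not change the order of the socle. If
`H ≤ A` is infinite, then `D = ⋂ₙ pⁿH` is a nonzero `p`-divisible subgroup of `H` (each `pⁿH` is
infinite, and a pigeonhole argument in the finite socle produces common elements and common
`p`-th roots). Since `D` is `p`-divisible, `|A[p]| = |D[p]| · |(A/D)[p]|`, so `A/D` has a
strictly smaller socle, and `A/H ≃ (A/D)/(H/D)`; induct on the order of the socle.
-/

open scoped AddSubgroup Pointwise

def IsPPrimary (p : ℕ) (A : Type*) [AddCommGroup A] : Prop :=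
  ∀ x : A, ∃ n : ℕ, p ^ n • x = 0

def IsPDivisible (p : ℕ) (A : Type*) [AddCommGroup A] : Prop :=
  ∀ x : A, ∃ y : A, p • y = x

lemma Set.Finite.exists_forall_mem_of_antitone {α : Type*} {s : Set α} (hs : s.Finite)
    {K : ℕ → Set α} (hK : Antitone K) (h : ∀ n, ∃ x ∈ s, x ∈ K n) : ∃ x ∈ s, ∀ n, x ∈ K n := by
  choose y hys hyK using h
  have := hs.to_subtype
  obtain ⟨x, hx⟩ := Finite.exists_infinite_fiber fun n => (⟨y n, hys n⟩ : s)
  refine ⟨x, x.2, fun n => ?_⟩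
  obtain ⟨m, hm, hnm⟩ := (Set.infinite_coe_iff.1 hx).exists_gt n
  exact hK hnm.le (congrArg Subtype.val hm ▸ hyK m)

namespace AddSubgroup

lemma card_eq_card_ker_inf_mul_card_map {G G' : Type*} [AddGroup G] [AddGroup G']
    (f : G →+ G') (K : AddSubgroup G) :
    Nat.card K = Nat.card ↥(f.ker ⊓ K) * Nat.card (K.map f) := by
  rw [← relIndex_ker, relIndex, ← inf_addSubgroupOf_right,
    ← Nat.card_congr (addSubgroupOfEquivOfLe inf_le_right).toEquiv, card_mul_index]

instance finite_inf_left {G : Type*} [AddGroup G] (H K : AddSubgroup G) [Finite H] :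
    Finite ↥(H ⊓ K) :=
  Finite.of_injective _ (inclusion_injective inf_le_left)

end AddSubgroup

section

variable {p : ℕ} {A B : Type*} [AddCommGroup A] [AddCommGroup B]

namespace IsPPrimary

lemma of_surjective (h : IsPPrimary p A) {f : A →+ B} (hf : Function.Surjective f) :
    IsPPrimary p B := by
  intro y
  obtain ⟨x, rfl⟩ := hf y
  obtain ⟨n, hn⟩ := h x
  exact ⟨n, by rw [← map_nsmul, hn, map_zero]⟩

lemma pi {ι : Type*} [Finite ι] (h : IsPPrimary p A) : IsPPrimary p (ι → A) := by
  intro x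
  choose n hn using fun i => h (x i)
  obtain ⟨N, hN⟩ := (Set.finite_range n).bddAbove
  refine ⟨N, funext fun i => addOrderOf_dvd_iff_nsmul_eq_zero.1 ?_⟩
  exact (addOrderOf_dvd_of_nsmul_eq_zero (hn i)).trans (pow_dvd_pow p (hN ⟨i, rfl⟩))

lemma exists_nsmul_ne_zero_mem_torsionBy (h : IsPPrimary p A) {x : A} (hx : x ≠ 0) :
    ∃ m : ℕ, p ^ m • x ≠ 0 ∧ p ^ m • x ∈ A[p] := by
  obtain ⟨n, hn⟩ := h x
  induction n with
  | zero => simp_all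
  | succ n ih =>
    by_cases h0 : p ^ n • x = 0
    · exact ih h0
    · exact ⟨n, h0, AddSubgroup.torsionBy.nsmul_iff.2 (by rwa [smul_smul, ← pow_succ'])⟩

lemma injective_of_disjoint (h : IsPPrimary p A) {f : A →+ B} (hf : Disjoint f.ker A[p]) :
    Function.Injective f := by
  refine (injective_iff_map_eq_zero f).2 fun x hx => by_contra fun hx0 => ?_
  obtain ⟨m, hm0, hm⟩ := h.exists_nsmul_ne_zero_mem_torsionBy hx0
  exact hm0 (AddSubgroup.disjoint_def.1 hf (by rw [AddMonoidHom.mem_ker, map_nsmul, hx,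
    smul_zero]) hm)

lemma surjective_of_torsionBy_le_range (h : IsPPrimary p B) (hA : IsPDivisible p A)
    {f : A →+ B} (hf : B[p] ≤ f.range) : Function.Surjective f := by
  intro b
  obtain ⟨n, hn⟩ := h b
  induction n generalizing b with
  | zero => exact ⟨0, by simp_all⟩
  | succ n ih =>
    obtain ⟨a, ha⟩ := ih (p • b) (by rwa [smul_smul, ← pow_succ])
    obtain ⟨a', rfl⟩ := hA a
    have hb : p • (b - f a') = 0 := by rw [smul_sub, ← map_nsmul, ha, sub_self]
    obtain ⟨c, hc⟩ := hf (AddSubgroup.torsionBy.nsmul_iff.2 hb)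
    exact ⟨a' + c, by rw [map_add, hc, add_sub_cancel]⟩

lemma exists_nsmul_eq_of_coprime (h : IsPPrimary p A) {r : ℕ} (hr : p.Coprime r) (x : A) :
    ∃ y, r • y = x := by
  obtain ⟨n, hn⟩ := h x
  have hrx : r.Coprime (addOrderOf x) :=
    (hr.pow_left n).symm.coprime_dvd_right (addOrderOf_dvd_of_nsmul_eq_zero hn)
  obtain ⟨m, hm⟩ := exists_nsmul_eq_self_of_coprime hrx
  exact ⟨m • x, by rwa [smul_comm]⟩

end IsPPrimary

namespace IsPDivisible

lemma of_surjective (h : IsPDivisible p A) {f : A →+ B} (hf : Function.Surjective f) :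
    IsPDivisible p B := by
  intro y
  obtain ⟨x, rfl⟩ := hf y
  obtain ⟨z, rfl⟩ := h x
  exact ⟨f z, (map_nsmul f p z).symm⟩

lemma pi {ι : Type*} (h : IsPDivisible p A) : IsPDivisible p (ι → A) := by
  intro x
  choose y hy using fun i => h (x i)
  exact ⟨y, funext hy⟩

lemma exists_pow_nsmul_eq (h : IsPDivisible p A) (k : ℕ) (x : A) : ∃ y, p ^ k • y = x := by
  induction k generalizing x with
  | zero => exact ⟨x, one_smul ℕ x⟩
  | succ k ih =>
    obtain ⟨y, rfl⟩ := ih x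
    obtain ⟨z, rfl⟩ := h y
    exact ⟨z, by rw [pow_succ, mul_smul]⟩

end IsPDivisible

lemma IsPPrimary.baer [hp : Fact p.Prime] (h : IsPPrimary p A) (hd : IsPDivisible p A) :
    Module.Baer ℤ A :=
  letI := divisibleByOfSMulRightSurj A ℕ fun {n} hn x => by
    obtain ⟨k, r, hr, rfl⟩ := Nat.exists_eq_pow_mul_and_not_dvd hn p hp.out.ne_one
    obtain ⟨y, rfl⟩ := h.exists_nsmul_eq_of_coprime (hp.out.coprime_iff_not_dvd.2 hr) x
    obtain ⟨z, rfl⟩ := hd.exists_pow_nsmul_eq k y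
    exact ⟨z, show (p ^ k * r) • z = r • p ^ k • z by rw [mul_comm, mul_smul]⟩
  letI := AddGroup.divisibleByIntOfDivisibleByNat A
  Module.Baer.of_divisible A

lemma ker_nsmul_eq_torsionBy : (DistribSMul.toAddMonoidHom A p).ker = A[p] := by
  ext x; simp

lemma card_torsionBy_eq_mul_card_torsionBy_quotient {D : AddSubgroup A} (hD : IsPDivisible p D) :
    Nat.card A[p] = Nat.card ↥(A[p] ⊓ D) * Nat.card (A ⧸ D)[p] := by
  rw [AddSubgroup.card_eq_card_ker_inf_mul_card_map (QuotientAddGroup.mk' D),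
    QuotientAddGroup.ker_mk', inf_comm]
  congr 3
  ext y
  induction y using QuotientAddGroup.induction_on with | H x => ?_
  simp only [AddSubgroup.mem_map, QuotientAddGroup.mk'_apply, AddSubgroup.torsionBy.nsmul_iff,
    ← QuotientAddGroup.mk_nsmul, QuotientAddGroup.eq_zero_iff, QuotientAddGroup.eq]
  constructor
  · rintro ⟨z, hz, hzx⟩
    simpa [hz] using D.nsmul_mem hzx p
  · intro hx
    obtain ⟨d, hd⟩ := hD ⟨p • x, hx⟩
    exact ⟨x - d, by rw [smul_sub, ← D.coe_nsmul, hd, sub_self], by simp⟩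

/-- Both sides times `|K|` count `T = {x | p • x ∈ K}`: via `x ↦ p • x`, which maps `T` onto `K`
with kernel `A[p]`, and via `T → (A ⧸ K)[p]`, which is onto with kernel `K`. -/
lemma card_torsionBy_quotient_of_finite (hA : IsPDivisible p A) (K : AddSubgroup A) [Finite K] :
    Nat.card (A ⧸ K)[p] = Nat.card A[p] := by
  set T := (A ⧸ K)[p].comap (QuotientAddGroup.mk' K)
  have hT (x : A) : x ∈ T ↔ p • x ∈ K := by simp [T, ← QuotientAddGroup.mk_nsmul]
  have hKT : K ≤ T := fun x hx => (hT x).2 (K.nsmul_mem hx p)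
  have hpT : A[p] ≤ T := fun x hx => (hT x).2 <| by
    rw [AddSubgroup.torsionBy.nsmul_iff.1 hx]; exact K.zero_mem
  set f := DistribSMul.toAddMonoidHom A p
  have hf : T.map f = K := by
    ext x
    refine ⟨?_, fun hx => ?_⟩
    · rintro ⟨y, hy, rfl⟩
      exact (hT y).1 hy
    · obtain ⟨y, rfl⟩ := hA x
      exact ⟨y, (hT y).2 hx, rfl⟩
  have h₁ := AddSubgroup.card_eq_card_ker_inf_mul_card_map f T
  have h₂ := AddSubgroup.card_eq_card_ker_inf_mul_card_map (QuotientAddGroup.mk' K) T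
  rw [ker_nsmul_eq_torsionBy, hf, inf_eq_left.2 hpT] at h₁
  rw [QuotientAddGroup.ker_mk', inf_eq_left.2 hKT,
    AddSubgroup.map_comap_eq_self_of_surjective (QuotientAddGroup.mk'_surjective K)] at h₂
  exact Nat.eq_of_mul_eq_mul_left Nat.card_pos (h₂.symm.trans (h₁.trans (mul_comm _ _)))

lemma card_torsionBy_pi {ι : Type*} [Finite ι] :
    Nat.card (ι → A)[p] = Nat.card A[p] ^ Nat.card ι := by
  rw [← Nat.card_fun]
  refine Nat.card_congr ((Equiv.subtypeEquivRight fun x => ?_).trans Equiv.subtypePiEquivPi)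
  simp [funext_iff]

lemma nonempty_addEquiv_of_card_eq [hp : Fact p.Prime] {S T : Type*} [AddCommGroup S]
    [AddCommGroup T] [Finite S] [Finite T] (hS : ∀ x : S, p • x = 0) (hT : ∀ x : T, p • x = 0)
    (h : Nat.card S = Nat.card T) : Nonempty (S ≃+ T) := by
  have : NeZero p := ⟨hp.out.ne_zero⟩
  let := AddCommGroup.zmodModule (n := p) hS
  let := AddCommGroup.zmodModule (n := p) hT
  have : Module.Finite (ZMod p) S := .of_finite
  have : Module.Finite (ZMod p) T := .of_finite
  rw [Module.natCard_eq_pow_finrank (K := ZMod p) (V := S),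
    Module.natCard_eq_pow_finrank (K := ZMod p) (V := T), Nat.card_zmod] at h
  exact ⟨(LinearEquiv.ofFinrankEq S T (Nat.pow_right_injective hp.out.two_le h)).toAddEquiv⟩

section Prufer

variable [hp : Fact p.Prime]

lemma isPPrimary_zpInfty : IsPPrimary p (ZpInfty p) := fun x =>
  let ⟨n, hn⟩ := x.2
  ⟨n, Subtype.ext hn⟩

lemma isPDivisible_zpInfty : IsPDivisible p (ZpInfty p) := by
  intro x
  obtain ⟨y, hy⟩ := DivisibleBy.surjective_smul QModZ ℤ (Int.natCast_ne_zero.2 hp.out.ne_zero) x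
  simp only [natCast_zsmul] at hy
  obtain ⟨n, hn⟩ := x.2
  exact ⟨⟨y, n + 1, by rw [pow_succ, mul_smul, hy, hn]⟩, Subtype.ext hy⟩

lemma torsionBy_qModZ_eq_zmultiples :
    QModZ[p] = AddSubgroup.zmultiples (((1 : ℚ) / p : ℚ) : QModZ) := by
  have : Fact ((0 : ℚ) < 1) := ⟨one_pos⟩
  ext x
  rw [AddSubgroup.torsionBy.nsmul_iff, AddSubgroup.mem_zmultiples_iff]
  constructor
  · intro hx
    obtain ⟨m, -, rfl⟩ := (AddCircle.nsmul_eq_zero_iff hp.out.pos).1 hx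
    exact ⟨m, by simp [div_eq_mul_inv]⟩
  · rintro ⟨m, rfl⟩
    have h := addOrderOf_nsmul_eq_zero (((1 : ℚ) / p : ℚ) : QModZ)
    rw [AddCircle.addOrderOf_period_div hp.out.pos] at h
    rw [smul_comm, h, smul_zero]

lemma card_torsionBy_zpInfty : Nat.card (ZpInfty p)[p] = p := by
  have : Fact ((0 : ℚ) < 1) := ⟨one_pos⟩
  have hmap : (ZpInfty p)[p].map (ZpInfty p).subtype = QModZ[p] := by
    ext x
    simp only [AddSubgroup.mem_map, AddSubgroup.torsionBy.nsmul_iff]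
    constructor
    · rintro ⟨y, hy, rfl⟩
      exact congrArg Subtype.val hy
    · intro hx
      exact ⟨⟨x, 1, by rwa [pow_one]⟩, Subtype.ext hx, rfl⟩
  rw [← AddSubgroup.card_map_of_injective (ZpInfty p).subtype_injective, hmap,
    torsionBy_qModZ_eq_zmultiples, Nat.card_zmultiples,
    AddCircle.addOrderOf_period_div hp.out.pos]

lemma card_torsionBy_pi_zpInfty (k : ℕ) : Nat.card (Fin k → ZpInfty p)[p] = p ^ k := by
  rw [card_torsionBy_pi, card_torsionBy_zpInfty, Nat.card_fin]

theorem nonempty_addEquiv_pi_zpInfty (hA : IsPPrimary p A) (hd : IsPDivisible p A) {k : ℕ}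
    (hk : Nat.card A[p] = p ^ k) : Nonempty (A ≃+ (Fin k → ZpInfty p)) := by
  have hW := card_torsionBy_pi_zpInfty (p := p) k
  have : Finite A[p] := Nat.finite_of_card_ne_zero (hk ▸ pow_ne_zero k hp.out.ne_zero)
  have : Finite (Fin k → ZpInfty p)[p] :=
    Nat.finite_of_card_ne_zero (hW ▸ pow_ne_zero k hp.out.ne_zero)
  obtain ⟨s⟩ := nonempty_addEquiv_of_card_eq (p := p) (fun x => AddSubgroup.torsionBy.nsmul x)
    (fun x => AddSubgroup.torsionBy.nsmul x) (hW.trans hk.symm)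
  obtain ⟨φ, hφ⟩ := (hA.baer hd).extension_property_addMonoidHom _
    (AddSubgroup.subtype_injective _) ((AddSubgroup.subtype _).comp s.toAddMonoidHom)
  have hφs (y : (Fin k → ZpInfty p)[p]) : φ y = s y := DFunLike.congr_fun hφ y
  have hinj : Function.Injective φ := isPPrimary_zpInfty.pi.injective_of_disjoint <|
    AddSubgroup.disjoint_def.2 fun {x} hx hxp => by
      have : s ⟨x, hxp⟩ = 0 := Subtype.ext ((hφs ⟨x, hxp⟩).symm.trans hx)
      simpa using this
  have hsurj : Function.Surjective φ :=
    hA.surjective_of_torsionBy_le_range isPDivisible_zpInfty.pi fun a ha =>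
      ⟨s.symm ⟨a, ha⟩, by rw [hφs, s.apply_symm_apply]⟩
  exact ⟨(AddEquiv.ofBijective φ ⟨hinj, hsurj⟩).symm⟩

end Prufer

namespace AddSubgroup

lemma antitone_pow_smul (H : AddSubgroup A) : Antitone fun n : ℕ => p ^ n • H := by
  intro m n hmn x hx
  obtain ⟨h, hh, rfl⟩ := (mem_smul_pointwise_iff_exists _ _ _).1 hx
  obtain ⟨k, rfl⟩ := Nat.exists_eq_add_of_le hmn
  exact (mem_smul_pointwise_iff_exists _ _ _).2
    ⟨p ^ k • h, H.nsmul_mem hh _, by rw [smul_smul, ← pow_add]⟩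

lemma infinite_smul [Finite A[p]] (H : AddSubgroup A) [Infinite H] : Infinite ↥(p • H) := by
  rw [← not_finite_iff_infinite]
  intro hfin
  have hcard := card_eq_card_ker_inf_mul_card_map (DistribSMul.toAddMonoidHom A p) H
  rw [Nat.card_eq_zero_of_infinite, ker_nsmul_eq_torsionBy] at hcard
  exact (Nat.mul_pos Nat.card_pos (Nat.card_pos (α := ↥(p • H)))).ne hcard

lemma infinite_pow_smul [Finite A[p]] (H : AddSubgroup A) [Infinite H] (n : ℕ) :
    Infinite ↥(p ^ n • H) := by
  induction n with
  | zero => rwa [pow_zero, one_smul]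
  | succ n ih => rw [pow_succ', mul_smul]; exact infinite_smul _

lemma iInf_pow_smul_ne_bot (hA : IsPPrimary p A) [Finite A[p]] (H : AddSubgroup A)
    [Infinite H] : ⨅ n : ℕ, p ^ n • H ≠ ⊥ := by
  have hs : ((A[p] : Set A) \ {0}).Finite := Set.toFinite _
  obtain ⟨x, ⟨-, hx0⟩, hxH⟩ := hs.exists_forall_mem_of_antitone
    (SetLike.coe_mono.comp_antitone (antitone_pow_smul H)) fun n => by
      have := infinite_pow_smul (p := p) H n
      obtain ⟨y, hy0⟩ := exists_ne (0 : ↥(p ^ n • H))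
      obtain ⟨m, hm0, hm⟩ := hA.exists_nsmul_ne_zero_mem_torsionBy
        (by simpa using hy0 : (y : A) ≠ 0)
      exact ⟨p ^ m • (y : A), ⟨hm, hm0⟩, (p ^ n • H).nsmul_mem y.2 _⟩
  exact ne_bot_iff_exists_ne_zero.2 ⟨⟨x, mem_iInf.2 hxH⟩, by simpa using hx0⟩

lemma isPDivisible_iInf_pow_smul [Finite A[p]] (H : AddSubgroup A) :
    IsPDivisible p ↥(⨅ n : ℕ, p ^ n • H) := by
  rintro ⟨x, hx⟩
  rw [mem_iInf] at hx
  have hroots (n : ℕ) : ∃ y ∈ {y : A | p • y = x}, y ∈ ((p ^ n • H : AddSubgroup A) : Set A) := by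
    obtain ⟨h, hh, rfl⟩ := (mem_smul_pointwise_iff_exists _ _ _).1 (hx (n + 1))
    exact ⟨p ^ n • h, show p • p ^ n • h = _ by rw [smul_smul, ← pow_succ'],
      (mem_smul_pointwise_iff_exists _ _ _).2 ⟨h, hh, rfl⟩⟩
  obtain ⟨y₀, hy₀, -⟩ := hroots 0
  -- The `p`-th roots of `x` form a coset of `A[p]`.
  have hs : {y : A | p • y = x}.Finite := ((Set.toFinite (A[p] : Set A)).image (y₀ + ·)).subset
    fun y hy => ⟨y - y₀, torsionBy.nsmul_iff.2 (by
      rw [smul_sub, show p • y = x from hy, show p • y₀ = x from hy₀, sub_self]),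
      add_sub_cancel y₀ y⟩
  obtain ⟨y, hy, hyH⟩ := hs.exists_forall_mem_of_antitone
    (SetLike.coe_mono.comp_antitone (antitone_pow_smul H)) hroots
  exact ⟨⟨y, mem_iInf.2 hyH⟩, Subtype.ext hy⟩

end AddSubgroup

lemma exists_lt_card_torsionBy_quotient_eq_pow [hp : Fact p.Prime] (hA : IsPPrimary p A)
    {D : AddSubgroup A} (hD : IsPDivisible p D) (hD0 : D ≠ ⊥) {k : ℕ}
    (hk : Nat.card A[p] = p ^ k) : ∃ m < k, Nat.card (A ⧸ D)[p] = p ^ m := by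
  have : Finite A[p] := Nat.finite_of_card_ne_zero (hk ▸ pow_ne_zero k hp.out.ne_zero)
  have hcard := card_torsionBy_eq_mul_card_torsionBy_quotient hD
  have hlt : 1 < Nat.card ↥(A[p] ⊓ D) := by
    obtain ⟨x, hxD, hx0⟩ := D.bot_or_exists_ne_zero.resolve_left hD0
    obtain ⟨m, hm0, hm⟩ := hA.exists_nsmul_ne_zero_mem_torsionBy hx0
    exact (AddSubgroup.one_lt_card_iff_ne_bot _).2 <| AddSubgroup.ne_bot_iff_exists_ne_zero.2
      ⟨⟨p ^ m • x, hm, D.nsmul_mem hxD _⟩, fun h => hm0 (congrArg Subtype.val h)⟩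
  obtain ⟨m, hmk, hm⟩ := (Nat.dvd_prime_pow hp.out).1 (Dvd.intro_left _ (hcard.symm.trans hk))
  refine ⟨m, hmk.lt_of_ne ?_, hm⟩
  rintro rfl
  rw [hk, hm] at hcard
  exact hcard.not_lt ((Nat.lt_mul_iff_one_lt_left (pow_pos hp.out.pos m)).2 hlt)

theorem finite_or_nonempty_addEquiv_quotient [hp : Fact p.Prime] (hA : IsPPrimary p A)
    (hd : IsPDivisible p A) {k : ℕ} (hk : Nat.card A[p] = p ^ k) (H : AddSubgroup A) :
    Finite H ∨ ∃ d' < k, Nonempty ((A ⧸ H) ≃+ (Fin d' → ZpInfty p)) := by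
  induction k using Nat.strong_induction_on generalizing A with
  | _ k ih =>
  rcases finite_or_infinite H with hH | hH
  · exact .inl hH
  have : Finite A[p] := Nat.finite_of_card_ne_zero (hk ▸ pow_ne_zero k hp.out.ne_zero)
  set D := ⨅ n : ℕ, p ^ n • H
  have hDH : D ≤ H := iInf_le_of_le 0 (by rw [pow_zero, one_smul])
  have hD := AddSubgroup.isPDivisible_iInf_pow_smul (p := p) H
  obtain ⟨m, hmk, hm⟩ :=
    exists_lt_card_torsionBy_quotient_eq_pow hA hD (AddSubgroup.iInf_pow_smul_ne_bot hA H) hk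
  have hA' := hA.of_surjective (QuotientAddGroup.mk'_surjective D)
  have hd' := hd.of_surjective (QuotientAddGroup.mk'_surjective D)
  have e := QuotientAddGroup.quotientQuotientEquivQuotient D H hDH
  right
  set H' := H.map (QuotientAddGroup.mk' D)
  rcases ih m hmk hA' hd' hm H' with hH' | ⟨d', hd'm, ⟨e'⟩⟩
  · obtain ⟨e'⟩ := nonempty_addEquiv_pi_zpInfty
      (hA'.of_surjective (QuotientAddGroup.mk'_surjective H'))
      (hd'.of_surjective (QuotientAddGroup.mk'_surjective H'))
      (by rw [card_torsionBy_quotient_of_finite hd' H', hm])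
    exact ⟨m, hmk, ⟨e.symm.trans e'⟩⟩
  · exact ⟨d', hd'm.trans hmk, ⟨e.symm.trans e'⟩⟩

end

/-- A subgroup `H` of a direct sum `G` of `d` copies of `ℤ(p^∞)` is either finite,
or `G ⧸ H` is isomorphic to a direct sum of `d' < d` copies of `ℤ(p^∞)`. -/
theorem subgroup_of_prufer_power
    (p : ℕ) [Fact p.Prime] (d : ℕ)
    (H : AddSubgroup (Fin d → ZpInfty p)) :
    Finite H ∨ ∃ d' : ℕ, d' < d ∧
      Nonempty (((Fin d → ZpInfty p) ⧸ H) ≃+ (Fin d' → ZpInfty p)) :=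
  finite_or_nonempty_addEquiv_quotient isPPrimary_zpInfty.pi isPDivisible_zpInfty.pi
    (card_torsionBy_pi_zpInfty d) H
end

section
/- Let p be a prime, let G be the direct sum of d copies of the Prüfer quasicyclic group ℤ(p^∞), and let φ : G → G be an endomorphism whose Reidemeister number is finite, i.e., the quotient of G by the image of the endomorphism a ↦ a - φ(a) is finite. Then the fixed-point subgroup C(φ) = {a ∈ G : φ(a) = a} is finite. -/
/-!
Write `ψ = 1 - φ` and `G[m]` for the `m`-torsion of `G`. A finite quotient of a `p`-divisible
`p`-primary group is trivial, so `ψ` is onto. As `G[p]` is finite, `G[p] ⊆ ψ(G[p^n])` for some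
`n`, and lifting through multiplication by `p` gives `G[p^k] ⊆ ψ(G[p^(k+n)])` for every `k`.
Together with `|G[p^(k+n)]| ≤ |G[p^k]| |G[p^n]|` this bounds `|ker ψ ∩ G[p^(k+n)]|` by
`|G[p^n]|` uniformly in `k`, and `ker ψ` is the increasing union of these subgroups.
-/

open AddSubgroup

namespace AddSubgroup

theorem card_eq_card_map_mul_card_ker_inf {G G' : Type*} [AddGroup G] [AddGroup G']
    (f : G →+ G') (H : AddSubgroup G) :
    Nat.card H = Nat.card (H.map f) * Nat.card ↥(f.ker ⊓ H) := by
  rw [← (f.ker.addSubgroupOf H).card_mul_index, ← relIndex, relIndex_ker,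
    ← addSubgroupOf_map_subtype, card_map_of_injective H.subtype_injective, mul_comm]

theorem finite_torsionBy_of_finite_torsionBy {A : Type*} [AddCommGroup A] {n : ℕ}
    (H : AddSubgroup A) [Finite A[n]] : Finite H[n] := by
  refine Finite.of_injective (fun x : H[n] ↦ (⟨x.1, ?_⟩ : A[n])) fun x y hxy ↦ ?_
  · exact torsionBy.nsmul_iff.mpr (congrArg Subtype.val (torsionBy.nsmul_iff.mp x.2))
  · have h := congrArg Subtype.val hxy
    exact Subtype.ext (Subtype.ext h)

instance finite_torsionBy_pi {ι : Type*} [Finite ι] {A : ι → Type*} [∀ i, AddCommGroup (A i)]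
    {n : ℕ} [∀ i, Finite (A i)[n]] : Finite (∀ i, A i)[n] :=
  Finite.of_injective
    (fun x i ↦ (⟨x.1 i, torsionBy.nsmul_iff.mpr (congrFun (torsionBy.nsmul_iff.mp x.2) i)⟩ :
      (A i)[n]))
    fun _ _ hxy ↦ Subtype.ext (funext fun i ↦ congrArg Subtype.val (congrFun hxy i))

variable {G : Type*} [AddCommGroup G] {p : ℕ}

theorem torsionBy_pow_mono : Monotone fun k : ℕ ↦ G[(p ^ k : ℕ)] := by
  intro a b hab x hx
  obtain ⟨c, rfl⟩ := Nat.exists_eq_add_of_le hab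
  rw [torsionBy.nsmul_iff] at hx ⊢
  rw [pow_add, mul_nsmul, hx, nsmul_zero]

theorem exists_coe_subset_torsionBy_pow (htors : AddCommGroup.primaryComponent G p = ⊤)
    (s : Finset G) : ∃ m, ↑s ⊆ (G[(p ^ m : ℕ)] : Set G) := by
  choose k hk using fun x : G ↦ AddCommGroup.mem_primaryComponent.mp (htors ▸ mem_top x)
  exact ⟨s.sup k, fun x hx ↦ torsionBy_pow_mono (Finset.le_sup hx) (torsionBy.nsmul_iff.mpr (hk x))⟩

theorem ker_nsmul_pow_eq_torsionBy (a : ℕ) :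
    (nsmulAddMonoidHom (p ^ a) : G →+ G).ker = G[(p ^ a : ℕ)] := by
  ext x
  rw [torsionBy.nsmul_iff, AddMonoidHom.mem_ker, nsmulAddMonoidHom_apply]

theorem map_nsmul_pow_torsionBy_pow_add_le (a b : ℕ) :
    G[(p ^ (a + b) : ℕ)].map (nsmulAddMonoidHom (p ^ a)) ≤ G[(p ^ b : ℕ)] := by
  rintro _ ⟨x, hx, rfl⟩
  rw [SetLike.mem_coe, torsionBy.nsmul_iff] at hx
  rw [torsionBy.nsmul_iff, nsmulAddMonoidHom_apply, ← mul_nsmul, ← pow_add, hx]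

theorem card_torsionBy_pow_add (a b : ℕ) :
    Nat.card G[(p ^ (a + b) : ℕ)] =
      Nat.card (G[(p ^ (a + b) : ℕ)].map (nsmulAddMonoidHom (p ^ a))) *
        Nat.card G[(p ^ a : ℕ)] := by
  rw [card_eq_card_map_mul_card_ker_inf (nsmulAddMonoidHom (p ^ a)), ker_nsmul_pow_eq_torsionBy,
    inf_eq_left.mpr (torsionBy_pow_mono (Nat.le_add_right a b))]

theorem card_torsionBy_pow_add_le (a b : ℕ) [Finite G[(p ^ b : ℕ)]] :
    Nat.card G[(p ^ (a + b) : ℕ)] ≤ Nat.card G[(p ^ a : ℕ)] * Nat.card G[(p ^ b : ℕ)] := by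
  rw [card_torsionBy_pow_add, mul_comm]
  exact Nat.mul_le_mul_left _ (card_le_of_le (map_nsmul_pow_torsionBy_pow_add_le a b))

theorem finite_torsionBy_pow [Finite G[p]] (n : ℕ) : Finite G[(p ^ n : ℕ)] := by
  have : Finite G[(p ^ 1 : ℕ)] := by rwa [pow_one]
  induction n with
  | zero => exact Finite.Set.subset _ (torsionBy_pow_mono (G := G) (p := p) zero_le_one)
  | succ n ih =>
    have := Finite.Set.subset _ (map_nsmul_pow_torsionBy_pow_add_le (G := G) (p := p) n 1)
    refine Nat.finite_of_card_ne_zero ?_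
    rw [card_torsionBy_pow_add]
    exact mul_ne_zero Nat.card_pos.ne' Nat.card_pos.ne'

end AddSubgroup

section PrimaryDivisible

variable {G : Type*} [AddCommGroup G] {p : ℕ}

theorem subsingleton_of_surjective_nsmul [Finite G]
    (htors : AddCommGroup.primaryComponent G p = ⊤)
    (hdiv : Function.Surjective (p • · : G → G)) : Subsingleton G := by
  have hinj : Function.Injective (p • · : G → G) := Finite.injective_iff_surjective.mpr hdiv
  have hzero : ∀ k (x : G), p ^ k • x = 0 → x = 0 := by
    intro k
    induction k with
    | zero => simp
    | succ k ih =>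
      intro x hx
      rw [pow_succ, mul_nsmul] at hx
      exact ih x (hinj (hx.trans (nsmul_zero p).symm))
  refine ⟨fun x y ↦ ?_⟩
  obtain ⟨k, hk⟩ := AddCommGroup.mem_primaryComponent.mp (htors ▸ mem_top (x - y))
  exact sub_eq_zero.mp (hzero k _ hk)

theorem surjective_of_finite_quotient_range {H : Type*} [AddGroup H]
    (htors : AddCommGroup.primaryComponent G p = ⊤) (hdiv : Function.Surjective (p • · : G → G))
    (ψ : H →+ G) [Finite (G ⧸ ψ.range)] : Function.Surjective ψ := by
  have : Subsingleton (G ⧸ ψ.range) := by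
    refine subsingleton_of_surjective_nsmul (p := p) ?_ ?_
    · refine (eq_top_iff' _).mpr (QuotientAddGroup.mk_surjective.forall.mpr fun x ↦ ?_)
      obtain ⟨k, hk⟩ := AddCommGroup.mem_primaryComponent.mp (htors ▸ mem_top x)
      exact ⟨k, by rw [← QuotientAddGroup.mk_nsmul, hk, QuotientAddGroup.mk_zero]⟩
    · refine QuotientAddGroup.mk_surjective.forall.mpr fun x ↦ ?_
      obtain ⟨y, rfl⟩ := hdiv x
      exact ⟨y, (QuotientAddGroup.mk_nsmul _ _ _).symm⟩
  exact fun x ↦ ψ.mem_range.mp ((QuotientAddGroup.eq_zero_iff x).mp (Subsingleton.elim _ _))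

theorem torsionBy_pow_succ_le_map (hdiv : Function.Surjective (p • · : G → G)) (ψ : G →+ G)
    {k n : ℕ} (h₁ : G[(p ^ 1 : ℕ)] ≤ G[(p ^ n : ℕ)].map ψ)
    (hk : G[(p ^ k : ℕ)] ≤ G[(p ^ (k + n) : ℕ)].map ψ) :
    G[(p ^ (k + 1) : ℕ)] ≤ G[(p ^ (k + 1 + n) : ℕ)].map ψ := by
  intro x hx
  rw [torsionBy.nsmul_iff] at hx
  obtain ⟨w, hw, hψw⟩ : p • x ∈ G[(p ^ (k + n) : ℕ)].map ψ :=
    hk (torsionBy.nsmul_iff.mpr (by rwa [pow_succ', mul_nsmul] at hx))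
  obtain ⟨w', rfl⟩ := hdiv w
  rw [SetLike.mem_coe, torsionBy.nsmul_iff] at hw
  obtain ⟨u, hu, hψu⟩ : x - ψ w' ∈ G[(p ^ n : ℕ)].map ψ :=
    h₁ (torsionBy.nsmul_iff.mpr (by rw [pow_one, nsmul_sub, ← map_nsmul, hψw, sub_self]))
  refine ⟨w' + u, add_mem ?_ (torsionBy_pow_mono (by omega) hu), ?_⟩
  · rw [torsionBy.nsmul_iff, add_right_comm, pow_succ', mul_nsmul, hw]
  · rw [map_add, hψu, add_sub_cancel]

theorem exists_torsionBy_pow_le_map (htors : AddCommGroup.primaryComponent G p = ⊤)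
    (hdiv : Function.Surjective (p • · : G → G)) [Finite G[p]] {ψ : G →+ G}
    (hψ : Function.Surjective ψ) : ∃ n, ∀ k, G[(p ^ k : ℕ)] ≤ G[(p ^ (k + n) : ℕ)].map ψ := by
  classical
  choose y hy using hψ
  obtain ⟨n, hn⟩ :=
    exists_coe_subset_torsionBy_pow htors ((G[p] : Set G).toFinite.toFinset.image y)
  have h₁ : G[(p ^ 1 : ℕ)] ≤ G[(p ^ n : ℕ)].map ψ := fun x hx ↦
    ⟨y x, hn (Finset.mem_image_of_mem y ((Set.Finite.mem_toFinset _).mpr (by rwa [pow_one] at hx))),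
      hy x⟩
  refine ⟨n, fun k ↦ ?_⟩
  induction k with
  | zero =>
    intro x hx
    rw [torsionBy.nsmul_iff, pow_zero, one_nsmul] at hx
    exact hx ▸ zero_mem _
  | succ k ih => exact torsionBy_pow_succ_le_map hdiv ψ h₁ ih

theorem card_ker_inf_torsionBy_pow_le [Finite G[p]] (ψ : G →+ G) {n : ℕ}
    (hn : ∀ k, G[(p ^ k : ℕ)] ≤ G[(p ^ (k + n) : ℕ)].map ψ) (k : ℕ) :
    Nat.card ↥(ψ.ker ⊓ G[(p ^ (k + n) : ℕ)]) ≤ Nat.card G[(p ^ n : ℕ)] := by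
  have := finite_torsionBy_pow (G := G) (p := p)
  have : Finite (G[(p ^ (k + n) : ℕ)].map ψ) :=
    Finite.of_surjective _ (ψ.addSubgroupMap_surjective _)
  refine Nat.le_of_mul_le_mul_left ?_ (Nat.card_pos (α := G[(p ^ k : ℕ)]))
  calc _ ≤ Nat.card (G[(p ^ (k + n) : ℕ)].map ψ) * Nat.card ↥(ψ.ker ⊓ G[(p ^ (k + n) : ℕ)]) :=
        Nat.mul_le_mul_right _ (card_le_of_le (hn k))
    _ = Nat.card G[(p ^ (k + n) : ℕ)] := (card_eq_card_map_mul_card_ker_inf ψ _).symm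
    _ ≤ _ := card_torsionBy_pow_add_le k n

theorem finite_ker_of_finite_quotient_range (htors : AddCommGroup.primaryComponent G p = ⊤)
    (hdiv : Function.Surjective (p • · : G → G)) [Finite G[p]] (ψ : G →+ G)
    [Finite (G ⧸ ψ.range)] : Finite ψ.ker := by
  obtain ⟨n, hn⟩ :=
    exists_torsionBy_pow_le_map htors hdiv (surjective_of_finite_quotient_range htors hdiv ψ)
  by_contra hfin
  have hinf : (ψ.ker : Set G).Infinite := Set.infinite_coe_iff.mp (not_finite_iff_infinite.mp hfin)
  obtain ⟨s, hsker, hcard⟩ := hinf.exists_subset_card_eq (Nat.card G[(p ^ n : ℕ)] + 1)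
  obtain ⟨m, hm⟩ := exists_coe_subset_torsionBy_pow htors s
  have hs : (s : Set G) ⊆ ↑(ψ.ker ⊓ G[(p ^ (m + n) : ℕ)]) :=
    fun x hx ↦ ⟨hsker hx, torsionBy_pow_mono (Nat.le_add_right m n) (hm hx)⟩
  have := finite_torsionBy_pow (G := G) (p := p) (m + n)
  have hle := Set.ncard_le_ncard hs ((Set.toFinite (G[(p ^ (m + n) : ℕ)] : Set G)).subset
    inf_le_right)
  rw [Set.ncard_coe_finset, hcard, ← Nat.card_coe_set_eq, SetLike.coe_sort_coe] at hle
  have := card_ker_inf_torsionBy_pow_le ψ hn m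
  omega

end PrimaryDivisible

theorem AddCommGroup.primaryComponent_pi_eq_top {ι : Type*} [Finite ι] {A : ι → Type*}
    [∀ i, AddCommGroup (A i)] {p : ℕ} (h : ∀ i, primaryComponent (A i) p = ⊤) :
    primaryComponent (∀ i, A i) p = ⊤ := by
  classical
  cases nonempty_fintype ι
  refine (eq_top_iff' _).mpr fun x ↦ ?_
  rw [← Finset.univ_sum_single x]
  refine sum_mem fun i _ ↦ ?_
  obtain ⟨k, hk⟩ := mem_primaryComponent.mp (h i ▸ mem_top (x i))
  exact ⟨k, by rw [← AddMonoidHom.single_apply, ← map_nsmul, hk, map_zero]⟩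

theorem AddCommGroup.surjective_nsmul_primaryComponent {A : Type*} [AddCommGroup A] {p : ℕ}
    (h : Function.Surjective (p • · : A → A)) :
    Function.Surjective (p • · : primaryComponent A p → primaryComponent A p) := by
  rintro ⟨x, k, hk⟩
  obtain ⟨y, rfl⟩ := h x
  exact ⟨⟨y, k + 1, by rwa [pow_succ', mul_nsmul]⟩, rfl⟩

namespace QModZ

theorem surjective_nsmul {n : ℕ} (hn : n ≠ 0) : Function.Surjective (n • · : QModZ → QModZ) :=
  QuotientAddGroup.mk_surjective.forall.mpr fun q ↦ ⟨((q / n : ℚ) : QModZ), by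
    show n • ((q / n : ℚ) : QModZ) = q
    rw [← QuotientAddGroup.mk_nsmul, nsmul_eq_mul, mul_div_cancel₀ _ (Nat.cast_ne_zero.mpr hn)]⟩

theorem finite_torsionBy {n : ℕ} (hn : 0 < n) : Finite QModZ[n] :=
  ((AddCircle.finite_torsion (1 : ℚ) hn).subset fun _ ↦ torsionBy.nsmul_iff.mp).to_subtype

end QModZ

namespace ZpInfty

variable {p : ℕ} [Fact p.Prime]

theorem primaryComponent_eq_top : AddCommGroup.primaryComponent (ZpInfty p) p = ⊤ :=
  (eq_top_iff' _).mpr fun x ↦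
    (AddCommGroup.mem_primaryComponent.mp x.2).imp fun _ hk ↦ Subtype.ext hk

theorem surjective_nsmul : Function.Surjective (p • · : ZpInfty p → ZpInfty p) :=
  AddCommGroup.surjective_nsmul_primaryComponent
    (QModZ.surjective_nsmul (Fact.out : p.Prime).ne_zero)

instance finite_torsionBy : Finite (ZpInfty p)[p] :=
  have := QModZ.finite_torsionBy (Fact.out : p.Prime).pos
  (ZpInfty p).finite_torsionBy_of_finite_torsionBy

end ZpInfty

/-- An endomorphism `φ` of a direct sum of `d` copies of `ℤ(p^∞)` with finite Reidemeister
number (i.e. finite cokernel of `1 - φ`) has a finite fixed-point subgroup. -/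
theorem fixedPoints_finite_of_prufer_power
    (p : ℕ) [Fact p.Prime] (d : ℕ)
    (φ : (Fin d → ZpInfty p) →+ (Fin d → ZpInfty p))
    (hR : Finite ((Fin d → ZpInfty p) ⧸ (AddMonoidHom.id (Fin d → ZpInfty p) - φ).range)) :
    Finite {a : Fin d → ZpInfty p // φ a = a} := by
  have := finite_ker_of_finite_quotient_range
    (AddCommGroup.primaryComponent_pi_eq_top fun _ ↦ ZpInfty.primaryComponent_eq_top)
    (Function.Surjective.piMap fun _ ↦ ZpInfty.surjective_nsmul) (AddMonoidHom.id _ - φ)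
  refine Finite.of_equiv (AddMonoidHom.id _ - φ).ker (Equiv.subtypeEquivRight fun a ↦ ?_)
  rw [AddMonoidHom.mem_ker, AddMonoidHom.sub_apply, AddMonoidHom.id_apply, sub_eq_zero, eq_comm]
end

section
/- Let A be an abelian group of finite Prüfer rank (every finitely generated subgroup of A can be generated by at most r elements, for some fixed r), let T be the torsion subgroup of A, and let φ : A → A be an automorphism whose Reidemeister number is finite, i.e., the quotient of A by the image of the endomorphism a ↦ a - φ(a) is finite. Then every fixed point of φ is a torsion element; that is, C(φ) ⊆ T, and hence C(φ) = C(φ|_T), the fixed-point subgroup of the restriction of φ to T. -/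
/-!
Let `ψ = 1 - φ` and `n` the (finite) index of its image, so `n • A ⊆ ψ(A)`. Starting from a
fixed point `a = y₀` of infinite order, choose `yₖ₊₁` with `ψ yₖ₊₁ = n • yₖ`. Then
`ψ^(k+1) yₖ = 0` while `ψ^k yₖ = nᵏ • a` has infinite order, and applying `ψ^k` to a relation
with top index `k` shows that the `yₖ` are `ℤ`-linearly independent. Already `y₀, …, y_r`
cannot lie in an `r`-generated subgroup, against finite rank.
-/

open Module

section Chain

variable {R M : Type*} [Ring R] [AddCommGroup M] [Module R M]

theorem Module.End.pow_apply_eq_zero_of_lt {f : End R M} {v : ℕ → M}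
    (hv : ∀ k, (f ^ (k + 1)) (v k) = 0) {i j : ℕ} (hij : i < j) : (f ^ j) (v i) = 0 := by
  obtain ⟨m, rfl⟩ := Nat.exists_eq_add_of_lt hij
  rw [show i + m + 1 = m + (i + 1) by omega, pow_add, Module.End.mul_apply, hv, map_zero]

theorem Module.End.linearIndependent_of_pow_apply_eq_zero (f : End R M) (v : ℕ → M)
    (hv : ∀ k, (f ^ (k + 1)) (v k) = 0)
    (hreg : ∀ k (c : R), c • (f ^ k) (v k) = 0 → c = 0) : LinearIndependent R v := by
  classical
  rw [linearIndependent_iff']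
  intro s
  induction s using Finset.induction_on_max with
  | empty => simp
  | insert k s hlt ih =>
    intro g hg
    have hk : k ∉ s := fun h => (hlt k h).false
    rw [Finset.sum_insert hk] at hg
    have hgk : g k = 0 := by
      refine hreg k (g k) ?_
      have := congr_arg (f ^ k) hg
      rwa [map_add, map_sum, map_zero, Finset.sum_eq_zero, add_zero, map_smul] at this
      intro i hi
      rw [map_smul, pow_apply_eq_zero_of_lt hv (hlt i hi), smul_zero]
    rw [hgk, zero_smul, zero_add] at hg
    intro i hi
    rcases Finset.mem_insert.mp hi with rfl | hi
    · exact hgk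
    · exact ih g hg i hi

variable {f : End R M} {c : R} {y : ℕ → M}

theorem Module.End.pow_apply_of_apply_succ_eq_smul (hy : ∀ k, f (y (k + 1)) = c • y k)
    (j k : ℕ) : (f ^ j) (y (k + j)) = c ^ j • y k := by
  induction j with
  | zero => simp
  | succ j ih =>
    rw [pow_succ, Module.End.mul_apply, ← add_assoc, hy, map_smul, ih, smul_smul, pow_succ']

theorem Module.End.pow_succ_apply_eq_zero_of_apply_succ_eq_smul
    (hy : ∀ k, f (y (k + 1)) = c • y k) (h0 : f (y 0) = 0) (k : ℕ) :
    (f ^ (k + 1)) (y k) = 0 := by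
  have hk : (f ^ k) (y k) = c ^ k • y 0 := by simpa using pow_apply_of_apply_succ_eq_smul hy k 0
  rw [pow_succ', Module.End.mul_apply, hk, map_smul, h0, smul_zero]

theorem exists_apply_succ_eq_smul (f : M → M) (c : R) (hc : ∀ x, ∃ z, f z = c • x) (a : M) :
    ∃ y : ℕ → M, y 0 = a ∧ ∀ k, f (y (k + 1)) = c • y k := by
  choose g hg using hc
  exact ⟨fun k => g^[k] a, rfl, fun k => by
    simp only [Function.iterate_succ_apply', hg]⟩

end Chain

section Torsion

variable {A : Type*} [AddCommGroup A]

theorem linearIndependent_of_apply_succ_eq_nsmul {f : End ℤ A} {n : ℕ} (hn : n ≠ 0) {y : ℕ → A}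
    (hy : ∀ k, f (y (k + 1)) = (n : ℤ) • y k) (h0 : f (y 0) = 0) (hy0 : ¬IsOfFinAddOrder (y 0)) :
    LinearIndependent ℤ y := by
  refine f.linearIndependent_of_pow_apply_eq_zero y
    (f.pow_succ_apply_eq_zero_of_apply_succ_eq_smul hy h0) fun k c hc => ?_
  have hk : (f ^ k) (y k) = (n : ℤ) ^ k • y 0 := by
    simpa using f.pow_apply_of_apply_succ_eq_smul hy k 0
  rw [hk, smul_smul] at hc
  by_contra hc0
  exact hy0 (isOfFinAddOrder_iff_zsmul_eq_zero.mpr ⟨_, mul_ne_zero hc0 (by positivity), hc⟩)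

theorem card_le_of_linearIndependent {r : ℕ}
    (hrk : ∀ H : AddSubgroup A, H.FG → ∃ S : Finset A, S.card ≤ r ∧ AddSubgroup.closure ↑S = H)
    {ι : Type*} [Fintype ι] {v : ι → A} (hv : LinearIndependent ℤ v) : Fintype.card ι ≤ r := by
  obtain ⟨S, hSr, hS⟩ := hrk (AddSubgroup.closure (Set.range v))
    ((AddSubgroup.fg_iff _).mpr ⟨_, rfl, Set.finite_range v⟩)
  have hspan : Set.range v ≤ Submodule.span ℤ (S : Set A) := by
    intro x hx
    rw [SetLike.mem_coe, ← Submodule.mem_toAddSubgroup,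
      Submodule.span_int_eq_addSubgroupClosure, hS]
    exact AddSubgroup.subset_closure hx
  have hcard := linearIndependent_le_span' v hv _ hspan
  simp only [Cardinal.mk_fintype, Finset.coe_sort_coe, Fintype.card_coe, Nat.cast_le] at hcard
  exact hcard.trans hSr

theorem isOfFinAddOrder_of_map_eq_zero {r : ℕ}
    (hrk : ∀ H : AddSubgroup A, H.FG → ∃ S : Finset A, S.card ≤ r ∧ AddSubgroup.closure ↑S = H)
    (ψ : A →+ A) [Finite (A ⧸ ψ.range)] {a : A} (ha : ψ a = 0) : IsOfFinAddOrder a := by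
  by_contra ha'
  obtain ⟨y, rfl, hy⟩ := exists_apply_succ_eq_smul ψ.toIntLinearMap (ψ.range.index : ℤ)
    (fun x => by simpa [natCast_zsmul] using ψ.range.nsmul_index_mem x) a
  have hli := linearIndependent_of_apply_succ_eq_nsmul ψ.range.index_ne_zero_of_finite hy ha ha'
  simpa using
    card_le_of_linearIndependent hrk (hli.comp (Fin.val : Fin (r + 1) → ℕ) Fin.val_injective)

end Torsion

/-- For an automorphism `φ` of an abelian group of finite Prüfer rank with finite
Reidemeister number (finite cokernel of `1 - φ`), every fixed point of `φ` is torsion;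
hence the fixed-point subgroup of `φ` coincides with the fixed-point subgroup of the
restriction of `φ` to the torsion subgroup `T`. -/
theorem fixedPoints_subset_torsion
    {A : Type*} [AddCommGroup A] (r : ℕ)
    (hrk : ∀ H : AddSubgroup A, H.FG →
      ∃ S : Finset A, S.card ≤ r ∧ AddSubgroup.closure ↑S = H)
    (φ : A ≃+ A)
    (hR : Finite (A ⧸ (AddMonoidHom.id A - φ.toAddMonoidHom).range)) :
    (∀ a : A, φ a = a → a ∈ AddCommGroup.torsion A) ∧
    {a : A | φ a = a}
      = Subtype.val '' {t : AddCommGroup.torsion A | φ (t : A) = (t : A)} := by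
  have fixed_torsion (a : A) (ha : φ a = a) : a ∈ AddCommGroup.torsion A :=
    isOfFinAddOrder_of_map_eq_zero hrk (AddMonoidHom.id A - φ.toAddMonoidHom) (by simp [ha])
  refine ⟨fixed_torsion, Set.ext fun a => ⟨fun ha => ⟨⟨a, fixed_torsion a ha⟩, ha, rfl⟩, ?_⟩⟩
  rintro ⟨t, ht, rfl⟩
  exact ht
end
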